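/- arXiv:2602.04069 — 6 statements merged into one kernel-verified Lean document; each statement's English description precedes it below -/
import Mathlib

section
/- Let P, Q ⊆ {1,…,n} be disjoint subsets with |P| ≥ |Q|, let 1 ≤ k ≤ n, and let A be a uniformly random k-element subset of {1,…,n}. Then the probability that |A ∩ P| ≥ |A ∩ Q| is at least 1/2. -/
/-- Let `P, Q ⊆ {1,…,n}` be disjoint with `|P| ≥ |Q|`, let `1 ≤ k ≤ n`, and
let `A` be a uniformly random `k`-element subset of `{1,…,n}`. Then
`ℙ[|A ∩ P| ≥ |A ∩ Q|] ≥ 1/2`. -/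
theorem stmt6 (n k : ℕ) (hk : 1 ≤ k) (hkn : k ≤ n) (P Q : Finset (Fin n))
    (hdisj : Disjoint P Q) (hcard : Q.card ≤ P.card) :
    (1 : ℝ) / 2 ≤
      (((Finset.powersetCard k (Finset.univ : Finset (Fin n))).filter
            (fun A => (A ∩ Q).card ≤ (A ∩ P).card)).card : ℝ) /
        ((Finset.powersetCard k (Finset.univ : Finset (Fin n))).card : ℝ) := by
  classical
  obtain ⟨P', hP'sub, hP'card⟩ := Finset.exists_subset_card_eq hcard
  have hQP' : Disjoint Q P' := (hdisj.mono_left hP'sub).symm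
  have hcardeq : Q.card = P'.card := hP'card.symm
  let e : {x // x ∈ Q} ≃ {x // x ∈ P'} := Finset.equivOfCardEq hcardeq
  set π : Fin n → Fin n := fun x =>
    if hq : x ∈ Q then (e ⟨x, hq⟩ : Fin n)
    else if hp : x ∈ P' then (e.symm ⟨x, hp⟩ : Fin n) else x with hπdef
  have hmemP' : ∀ x (h : x ∈ Q), ((e ⟨x, h⟩ : {x // x ∈ P'}) : Fin n) ∈ P' :=
    fun x h => (e ⟨x, h⟩).2
  have hmemQ : ∀ x (h : x ∈ P'), ((e.symm ⟨x, h⟩ : {x // x ∈ Q}) : Fin n) ∈ Q :=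
    fun x h => (e.symm ⟨x, h⟩).2
  have hπQ : ∀ a, π a ∈ Q ↔ a ∈ P' := by
    intro a
    by_cases hq : a ∈ Q
    · rw [hπdef]; simp only [dif_pos hq]
      constructor
      · intro h; exact absurd h (Finset.disjoint_left.mp hQP'.symm (hmemP' a hq))
      · intro h; exact absurd h (Finset.disjoint_left.mp hQP' hq)
    · by_cases hp : a ∈ P'
      · rw [hπdef]; simp only [dif_neg hq, dif_pos hp]
        simp [hmemQ a hp, hp]
      · rw [hπdef]; simp only [dif_neg hq, dif_neg hp]
        simp [hq, hp]
  have hπP' : ∀ a, π a ∈ P' ↔ a ∈ Q := by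
    intro a
    by_cases hq : a ∈ Q
    · rw [hπdef]; simp only [dif_pos hq]
      simp [hmemP' a hq, hq]
    · by_cases hp : a ∈ P'
      · rw [hπdef]; simp only [dif_neg hq, dif_pos hp]
        constructor
        · intro h; exact absurd h (Finset.disjoint_left.mp hQP' (hmemQ a hp))
        · intro h; exact absurd h hq
      · rw [hπdef]; simp only [dif_neg hq, dif_neg hp]
        simp [hq, hp]
  have hinv : ∀ a, π (π a) = a := by
    intro a
    by_cases hq : a ∈ Q
    · have h1 : π a = ((e ⟨a, hq⟩ : {x // x ∈ P'}) : Fin n) := by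
        rw [hπdef]; simp only [dif_pos hq]
      have h2 : π a ∈ P' := h1 ▸ hmemP' a hq
      have h3 : π a ∉ Q := fun h => (Finset.disjoint_left.mp hQP'.symm h2) h
      show (if hq' : π a ∈ Q then ((e ⟨π a, hq'⟩ : {x // x ∈ P'}) : Fin n) else if hp' : π a ∈ P' then ((e.symm ⟨π a, hp'⟩ : {x // x ∈ Q}) : Fin n) else π a) = a
      simp only [dif_neg h3, dif_pos h2]
      have : (⟨π a, h2⟩ : {x // x ∈ P'}) = e ⟨a, hq⟩ := Subtype.ext h1
      rw [this, Equiv.symm_apply_apply]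
    · by_cases hp : a ∈ P'
      · have h1 : π a = ((e.symm ⟨a, hp⟩ : {x // x ∈ Q}) : Fin n) := by
          rw [hπdef]; simp only [dif_neg hq, dif_pos hp]
        have h2 : π a ∈ Q := h1 ▸ hmemQ a hp
        show (if hq' : π a ∈ Q then ((e ⟨π a, hq'⟩ : {x // x ∈ P'}) : Fin n) else if hp' : π a ∈ P' then ((e.symm ⟨π a, hp'⟩ : {x // x ∈ Q}) : Fin n) else π a) = a
        simp only [dif_pos h2]
        have : (⟨π a, h2⟩ : {x // x ∈ Q}) = e.symm ⟨a, hp⟩ := Subtype.ext h1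
        rw [this, Equiv.apply_symm_apply]
      · have h1 : π a = a := by rw [hπdef]; simp only [dif_neg hq, dif_neg hp]
        rw [h1, h1]
  have hinj : Function.Injective π := Function.LeftInverse.injective hinv
  -- key set identities
  have key1 : ∀ A : Finset (Fin n), A.image π ∩ Q = (A ∩ P').image π := by
    intro A
    ext x
    simp only [Finset.mem_inter, Finset.mem_image]
    constructor
    · rintro ⟨⟨a, ha, rfl⟩, hxQ⟩
      exact ⟨a, ⟨ha, (hπQ a).mp hxQ⟩, rfl⟩
    · rintro ⟨a, ⟨ha, haP'⟩, rfl⟩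
      exact ⟨⟨a, ha, rfl⟩, (hπQ a).mpr haP'⟩
  have key2 : ∀ A : Finset (Fin n), (A ∩ Q).image π ⊆ A.image π ∩ P := by
    intro A x hx
    simp only [Finset.mem_image, Finset.mem_inter] at hx ⊢
    obtain ⟨a, ⟨ha, haQ⟩, rfl⟩ := hx
    exact ⟨⟨a, ha, rfl⟩, hP'sub ((hπP' a).mpr haQ)⟩
  set S := Finset.powersetCard k (Finset.univ : Finset (Fin n)) with hS
  set c : Finset (Fin n) → Prop := fun A => (A ∩ Q).card ≤ (A ∩ P).card with hc
  have hgood : ∀ A ∈ S.filter (fun A => ¬ c A), A.image π ∈ S.filter c := by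
    intro A hA
    rw [Finset.mem_filter] at hA ⊢
    obtain ⟨hAS, hAbad⟩ := hA
    rw [Finset.mem_powersetCard_univ] at hAS
    simp only [hc, not_le] at hAbad
    constructor
    · rw [Finset.mem_powersetCard_univ, Finset.card_image_of_injective A hinj]
      exact hAS
    · have e1 : (A.image π ∩ Q).card = (A ∩ P').card := by
        rw [key1 A, Finset.card_image_of_injective _ hinj]
      have e2 : (A ∩ Q).card ≤ (A.image π ∩ P).card := by
        calc (A ∩ Q).card = ((A ∩ Q).image π).card :=
              (Finset.card_image_of_injective _ hinj).symm
          _ ≤ (A.image π ∩ P).card := Finset.card_le_card (key2 A)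
      have e3 : (A ∩ P').card ≤ (A ∩ P).card :=
        Finset.card_le_card (Finset.inter_subset_inter_left hP'sub)
      show (A.image π ∩ Q).card ≤ (A.image π ∩ P).card
      omega
  have hcardle : (S.filter (fun A => ¬ c A)).card ≤ (S.filter c).card :=
    Finset.card_le_card_of_injOn (fun A => A.image π) hgood
      (fun a _ b _ hab => Finset.image_injective hinj hab)
  have hsplit : (S.filter c).card + (S.filter (fun A => ¬ c A)).card = S.card :=
    Finset.card_filter_add_card_filter_not (p := c)
  have hSpos : 0 < S.card := by
    rw [hS, Finset.card_powersetCard, Finset.card_univ, Fintype.card_fin]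
    exact Nat.choose_pos hkn
  have hSle : S.card ≤ 2 * (S.filter c).card := by omega
  have hSpos' : (0 : ℝ) < (S.card : ℝ) := by exact_mod_cast hSpos
  rw [div_le_div_iff₀ (by norm_num) hSpos']
  have : (S.card : ℝ) ≤ 2 * ((S.filter c).card : ℝ) := by exact_mod_cast hSle
  linarith
end

section
/- Let P, Q ⊆ {1,…,n} be disjoint subsets, let 1 ≤ k ≤ n, and let A be a uniformly random k-element subset of {1,…,n}. Then for all integers s and t, the events {|A ∩ P| ≥ s} and {|A ∩ Q| ≤ t} are positively correlated; that is, P[|A ∩ P| ≥ s and |A ∩ Q| ≤ t] ≥ P[|A ∩ P| ≥ s] · P[|A ∩ Q| ≤ t]. -/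
open Finset


variable {α : Type*} [DecidableEq α]

/-- Double counting step: `(m+1) * M(m+1) ≤ (|S|-m) * M(m)` where `M(j)` counts
`j`-subsets `B` of `S` with `|B ∩ Q| ≤ t`. -/
lemma stmt7_step (S Q : Finset α) (t m : ℕ) :
    (m + 1) * ((powersetCard (m + 1) S).filter (fun B => (B ∩ Q).card ≤ t)).card ≤
      (S.card - m) * ((powersetCard m S).filter (fun B => (B ∩ Q).card ≤ t)).card := by
  set G1 := (powersetCard (m + 1) S).filter (fun B => (B ∩ Q).card ≤ t) with hG1
  set G0 := (powersetCard m S).filter (fun B => (B ∩ Q).card ≤ t) with hG0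
  have hcard1 : ∀ B ∈ G1, B ⊆ S ∧ B.card = m + 1 ∧ (B ∩ Q).card ≤ t := by
    intro B hB
    simp only [hG1, mem_filter, mem_powersetCard] at hB
    exact ⟨hB.1.1, hB.1.2, hB.2⟩
  have hcard0 : ∀ B ∈ G0, B ⊆ S ∧ B.card = m ∧ (B ∩ Q).card ≤ t := by
    intro B hB
    simp only [hG0, mem_filter, mem_powersetCard] at hB
    exact ⟨hB.1.1, hB.1.2, hB.2⟩
  have h1 : (G1.sigma (fun B => (B : Finset α))).card = (m + 1) * G1.card := by
    rw [card_sigma]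
    rw [Finset.sum_congr rfl (fun B hB => (hcard1 B hB).2.1)]
    simp [mul_comm]
  have h0 : (G0.sigma (fun B => S \ B)).card = (S.card - m) * G0.card := by
    rw [card_sigma]
    have hsd : ∀ B ∈ G0, (S \ B).card = S.card - m := fun B hB => by
      rw [card_sdiff_of_subset (hcard0 B hB).1, (hcard0 B hB).2.1]
    rw [Finset.sum_congr rfl hsd]
    simp [mul_comm]
  rw [← h1, ← h0]
  apply card_le_card_of_injOn (fun p => ⟨p.1.erase p.2, p.2⟩)
  · rintro ⟨B, x⟩ hp
    simp only [Finset.mem_coe, mem_sigma] at hp ⊢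
    obtain ⟨hB, hx⟩ := hp
    obtain ⟨hBS, hBc, hBQ⟩ := hcard1 B hB
    constructor
    · simp only [hG0, mem_filter, mem_powersetCard]
      refine ⟨⟨(erase_subset x B).trans hBS, ?_⟩, ?_⟩
      · rw [card_erase_of_mem hx, hBc]; rfl
      · exact le_trans (card_le_card (inter_subset_inter_right (erase_subset x B))) hBQ
    · simp only [mem_sdiff]
      exact ⟨hBS hx, notMem_erase x B⟩
  · rintro ⟨B, x⟩ hp ⟨B', x'⟩ hp' h
    simp only [Sigma.mk.inj_iff, heq_eq_eq] at h
    obtain ⟨he, hx⟩ := h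
    simp only [Finset.mem_coe, mem_sigma] at hp hp'
    subst hx
    have hB : x ∈ B := hp.2
    have hB' : x ∈ B' := hp'.2
    have : B = B' := by
      rw [← insert_erase hB, ← insert_erase hB', he]
    simp [this]

lemma stmt7_mono (S Q : Finset α) (t m m' : ℕ) (h : m ≤ m') :
    ((powersetCard m' S).filter (fun B => (B ∩ Q).card ≤ t)).card * S.card.choose m ≤
      ((powersetCard m S).filter (fun B => (B ∩ Q).card ≤ t)).card * S.card.choose m' := by
  induction m' , h using Nat.le_induction with
  | base => rfl
  | succ m' hm ih =>
    have hstep := stmt7_step S Q t m'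
    have hch : S.card.choose (m' + 1) * (m' + 1) = S.card.choose m' * (S.card - m') :=
      Nat.choose_succ_right_eq S.card m'
    have key : ((powersetCard (m' + 1) S).filter (fun B => (B ∩ Q).card ≤ t)).card *
        S.card.choose m * (m' + 1) ≤
        ((powersetCard m S).filter (fun B => (B ∩ Q).card ≤ t)).card *
        S.card.choose (m' + 1) * (m' + 1) := by
      calc ((powersetCard (m' + 1) S).filter (fun B => (B ∩ Q).card ≤ t)).card *
            S.card.choose m * (m' + 1)
          = ((m' + 1) * ((powersetCard (m' + 1) S).filter (fun B => (B ∩ Q).card ≤ t)).card) *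
            S.card.choose m := by ring
        _ ≤ ((S.card - m') * ((powersetCard m' S).filter (fun B => (B ∩ Q).card ≤ t)).card) *
            S.card.choose m := Nat.mul_le_mul_right _ hstep
        _ = (((powersetCard m' S).filter (fun B => (B ∩ Q).card ≤ t)).card * S.card.choose m) *
            (S.card - m') := by ring
        _ ≤ (((powersetCard m S).filter (fun B => (B ∩ Q).card ≤ t)).card * S.card.choose m') *
            (S.card - m') := Nat.mul_le_mul_right _ ih
        _ = ((powersetCard m S).filter (fun B => (B ∩ Q).card ≤ t)).card *
            (S.card.choose m' * (S.card - m')) := by ring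
        _ = ((powersetCard m S).filter (fun B => (B ∩ Q).card ≤ t)).card *
            S.card.choose (m' + 1) * (m' + 1) := by rw [← hch]; ring
    exact Nat.le_of_mul_le_mul_right key (Nat.succ_pos m')


lemma stmt7_fact {n : ℕ} (P : Finset (Fin n)) (k a : ℕ) (ha : a ≤ k)
    (R : Finset (Fin n) → Prop) [DecidablePred R] :
    ((Finset.powersetCard k (Finset.univ : Finset (Fin n))).filter
        (fun A => (A ∩ P).card = a ∧ R (A \ P))).card =
      (powersetCard a P).card * ((powersetCard (k - a) Pᶜ).filter R).card := by
  rw [← card_product, ← Finset.filter_product_right]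
  apply card_bij' (fun A _ => (A ∩ P, A \ P)) (fun p _ => p.1 ∪ p.2)
  · intro A hA
    simp only [mem_filter, mem_powersetCard] at hA ⊢
    obtain ⟨⟨_, hAk⟩, hAa, hAR⟩ := hA
    have hsplit : (A ∩ P).card + (A \ P).card = k := by
      rw [card_inter_add_card_sdiff, hAk]
    refine ⟨mem_product.mpr ⟨?_, ?_⟩, hAR⟩
    · exact mem_powersetCard.mpr ⟨inter_subset_right, hAa⟩
    · refine mem_powersetCard.mpr ⟨fun x hx => ?_, show (A \ P).card = k - a by omega⟩
      rw [mem_compl]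
      exact (mem_sdiff.mp hx).2
  · intro p hp
    simp only [mem_filter, mem_product, mem_powersetCard] at hp
    obtain ⟨⟨⟨hp1, hc1⟩, hp2, hc2⟩, hR⟩ := hp
    have hdisj : Disjoint p.1 p.2 :=
      Finset.disjoint_left.mpr (fun x hx1 hx2 => (mem_compl.mp (hp2 hx2)) (hp1 hx1))
    simp only [mem_filter, mem_powersetCard]
    have h1 : (p.1 ∪ p.2) ∩ P = p.1 := by
      ext x
      simp only [mem_inter, mem_union]
      constructor
      · rintro ⟨hx | hx, hxP⟩
        · exact hx
        · exact absurd hxP (mem_compl.mp (hp2 hx))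
      · intro hx; exact ⟨Or.inl hx, hp1 hx⟩
    have h2 : (p.1 ∪ p.2) \ P = p.2 := by
      ext x
      simp only [mem_sdiff, mem_union]
      constructor
      · rintro ⟨hx | hx, hxP⟩
        · exact absurd (hp1 hx) hxP
        · exact hx
      · intro hx; exact ⟨Or.inr hx, mem_compl.mp (hp2 hx)⟩
    refine ⟨⟨subset_univ _, ?_⟩, by rw [h1, hc1], by rw [h2]; exact hR⟩
    rw [card_union_of_disjoint hdisj, hc1, hc2]
    omega
  · intro A hA
    simp only
    ext x
    simp only [mem_union, mem_inter, mem_sdiff]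
    tauto
  · intro p hp
    simp only [mem_filter, mem_product, mem_powersetCard] at hp
    obtain ⟨⟨⟨hp1, hc1⟩, hp2, hc2⟩, hR⟩ := hp
    have h1 : (p.1 ∪ p.2) ∩ P = p.1 := by
      ext x
      simp only [mem_inter, mem_union]
      constructor
      · rintro ⟨hx | hx, hxP⟩
        · exact hx
        · exact absurd hxP (mem_compl.mp (hp2 hx))
      · intro hx; exact ⟨Or.inl hx, hp1 hx⟩
    have h2 : (p.1 ∪ p.2) \ P = p.2 := by
      ext x
      simp only [mem_sdiff, mem_union]
      constructor
      · rintro ⟨hx | hx, hxP⟩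
        · exact absurd (hp1 hx) hxP
        · exact hx
      · intro hx; exact ⟨Or.inr hx, mem_compl.mp (hp2 hx)⟩
    rw [h1, h2]

lemma stmt7_cross {n : ℕ} (P Q : Finset (Fin n)) (hd : Disjoint P Q) (k a b t : ℕ)
    (hba : b ≤ a) (hak : a ≤ k) :
    ((Finset.powersetCard k (Finset.univ : Finset (Fin n))).filter
        (fun A => (A ∩ P).card = b ∧ (A ∩ Q).card ≤ t)).card *
      ((Finset.powersetCard k (Finset.univ : Finset (Fin n))).filter
        (fun A => (A ∩ P).card = a)).card ≤
    ((Finset.powersetCard k (Finset.univ : Finset (Fin n))).filter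
        (fun A => (A ∩ P).card = a ∧ (A ∩ Q).card ≤ t)).card *
      ((Finset.powersetCard k (Finset.univ : Finset (Fin n))).filter
        (fun A => (A ∩ P).card = b)).card := by
  have hbk : b ≤ k := hba.trans hak
  have hQ : ∀ A : Finset (Fin n), A ∩ Q = (A \ P) ∩ Q := by
    intro A
    ext x
    simp only [mem_inter, mem_sdiff]
    exact ⟨fun ⟨h1, h2⟩ => ⟨⟨h1, fun hP => disjoint_left.mp hd hP h2⟩, h2⟩,
      fun ⟨⟨h1, _⟩, h2⟩ => ⟨h1, h2⟩⟩
  have hg : ∀ c, c ≤ k → ((Finset.powersetCard k (Finset.univ : Finset (Fin n))).filter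
      (fun A => (A ∩ P).card = c ∧ (A ∩ Q).card ≤ t)).card =
      (powersetCard c P).card *
        ((powersetCard (k - c) Pᶜ).filter (fun B => (B ∩ Q).card ≤ t)).card := by
    intro c hc
    rw [← stmt7_fact P k c hc (fun B => (B ∩ Q).card ≤ t)]
    congr 1
    apply filter_congr
    intro A _
    rw [hQ A]
  have hn : ∀ c, c ≤ k → ((Finset.powersetCard k (Finset.univ : Finset (Fin n))).filter
      (fun A => (A ∩ P).card = c)).card =
      (powersetCard c P).card * (Pᶜ.card.choose (k - c)) := by
    intro c hc
    rw [← card_powersetCard, ← filter_true (powersetCard (k - c) Pᶜ),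
      ← stmt7_fact P k c hc (fun _ => True)]
    congr 1
    apply filter_congr
    intro A _
    simp
  rw [hg b hbk, hg a hak, hn a hak, hn b hbk]
  have hmono := stmt7_mono Pᶜ Q t (k - a) (k - b) (by omega)
  calc (powersetCard b P).card *
        ((powersetCard (k - b) Pᶜ).filter (fun B => (B ∩ Q).card ≤ t)).card *
        ((powersetCard a P).card * Pᶜ.card.choose (k - a))
      = ((powersetCard a P).card * (powersetCard b P).card) *
        (((powersetCard (k - b) Pᶜ).filter (fun B => (B ∩ Q).card ≤ t)).card *
          Pᶜ.card.choose (k - a)) := by ring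
    _ ≤ ((powersetCard a P).card * (powersetCard b P).card) *
        (((powersetCard (k - a) Pᶜ).filter (fun B => (B ∩ Q).card ≤ t)).card *
          Pᶜ.card.choose (k - b)) := Nat.mul_le_mul_left _ hmono
    _ = (powersetCard a P).card *
        ((powersetCard (k - a) Pᶜ).filter (fun B => (B ∩ Q).card ≤ t)).card *
        ((powersetCard b P).card * Pᶜ.card.choose (k - b)) := by ring

lemma stmt7_nat {n k : ℕ} (P Q : Finset (Fin n)) (hd : Disjoint P Q) (s t : ℕ) :
    ((Finset.powersetCard k (Finset.univ : Finset (Fin n))).filter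
        (fun A => s ≤ (A ∩ P).card)).card *
      ((Finset.powersetCard k (Finset.univ : Finset (Fin n))).filter
        (fun A => (A ∩ Q).card ≤ t)).card ≤
    ((Finset.powersetCard k (Finset.univ : Finset (Fin n))).filter
        (fun A => s ≤ (A ∩ P).card ∧ (A ∩ Q).card ≤ t)).card *
      (Finset.powersetCard k (Finset.univ : Finset (Fin n))).card := by
  set Ω := Finset.powersetCard k (Finset.univ : Finset (Fin n)) with hΩdef
  set nc : ℕ → ℕ := fun a => (Ω.filter (fun A => (A ∩ P).card = a)).card with hnc
  set gc : ℕ → ℕ := fun a => (Ω.filter (fun A => (A ∩ P).card = a ∧ (A ∩ Q).card ≤ t)).card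
    with hgc
  set J : Finset ℕ := Finset.range (k + 1) with hJ
  set I : Finset ℕ := J.filter (fun a => s ≤ a) with hI
  set I' : Finset ℕ := J.filter (fun a => ¬ s ≤ a) with hI'
  have hXk : ∀ A ∈ Ω, (A ∩ P).card ∈ J := by
    intro A hA
    have := (mem_powersetCard.mp hA).2
    have h2 : (A ∩ P).card ≤ A.card := card_le_card inter_subset_left
    simp only [hJ, mem_range]
    omega
  have hΩc : Ω.card = ∑ a ∈ J, nc a :=
    card_eq_sum_card_fiberwise hXk
  have hGc : (Ω.filter (fun A => (A ∩ Q).card ≤ t)).card = ∑ a ∈ J, gc a := by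
    rw [card_eq_sum_card_fiberwise (f := fun A => (A ∩ P).card) (t := J)
      (fun A hA => hXk A (mem_filter.mp hA).1)]
    apply Finset.sum_congr rfl
    intro a _
    rw [filter_filter]
    congr 1
    apply filter_congr
    intro A _
    simp only [and_comm]
  have hFc : (Ω.filter (fun A => s ≤ (A ∩ P).card)).card = ∑ a ∈ I, nc a := by
    rw [card_eq_sum_card_fiberwise (f := fun A => (A ∩ P).card) (t := I)
      (fun A hA => by
        simp only [hI, Finset.mem_coe, mem_filter]
        exact ⟨hXk A (mem_filter.mp hA).1, (mem_filter.mp hA).2⟩)]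
    apply Finset.sum_congr rfl
    intro a ha
    have hsa : s ≤ a := (mem_filter.mp ha).2
    rw [filter_filter]
    congr 1
    apply filter_congr
    intro A _
    constructor
    · exact fun h => h.2
    · intro h; exact ⟨h ▸ hsa, h⟩
  have hFGc : (Ω.filter (fun A => s ≤ (A ∩ P).card ∧ (A ∩ Q).card ≤ t)).card
      = ∑ a ∈ I, gc a := by
    rw [card_eq_sum_card_fiberwise (f := fun A => (A ∩ P).card) (t := I)
      (fun A hA => by
        simp only [hI, Finset.mem_coe, mem_filter]
        exact ⟨hXk A (mem_filter.mp hA).1, (mem_filter.mp hA).2.1⟩)]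
    apply Finset.sum_congr rfl
    intro a ha
    have hsa : s ≤ a := (mem_filter.mp ha).2
    rw [filter_filter]
    congr 1
    apply filter_congr
    intro A _
    constructor
    · exact fun h => ⟨h.2, h.1.2⟩
    · rintro ⟨h1, h2⟩; exact ⟨⟨h1 ▸ hsa, h2⟩, h1⟩
  rw [hΩc, hGc, hFc, hFGc]
  rw [← Finset.sum_filter_add_sum_filter_not J (fun a => s ≤ a) gc,
    ← Finset.sum_filter_add_sum_filter_not J (fun a => s ≤ a) nc]
  rw [← hI, ← hI', mul_add, mul_add]
  apply add_le_add
  · rw [mul_comm]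
  · rw [Finset.sum_mul_sum, Finset.sum_mul_sum]
    apply Finset.sum_le_sum
    intro a ha
    apply Finset.sum_le_sum
    intro b hb
    have hak : a ≤ k := by
      have := (mem_filter.mp ha).1; simp only [hJ, mem_range] at this; omega
    have hsa : s ≤ a := (mem_filter.mp ha).2
    have hbs : ¬ s ≤ b := (mem_filter.mp hb).2
    have hba : b ≤ a := by omega
    calc nc a * gc b = gc b * nc a := mul_comm _ _
      _ ≤ gc a * nc b := stmt7_cross P Q hd k a b t hba hak


/-- Let `P, Q ⊆ {1,…,n}` be disjoint, `1 ≤ k ≤ n`, and `A` a uniformly random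
`k`-element subset of `{1,…,n}`. For all integers `s, t`, the events `|A ∩ P| ≥ s` and
`|A ∩ Q| ≤ t` are positively correlated. -/
theorem stmt7 (n k : ℕ) (hk : 1 ≤ k) (hkn : k ≤ n) (P Q : Finset (Fin n))
    (hdisj : Disjoint P Q) (s t : ℤ) :
    (((Finset.powersetCard k (Finset.univ : Finset (Fin n))).filter
          (fun A => s ≤ ((A ∩ P).card : ℤ))).card : ℝ) /
        ((Finset.powersetCard k (Finset.univ : Finset (Fin n))).card : ℝ) *
      ((((Finset.powersetCard k (Finset.univ : Finset (Fin n))).filter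
          (fun A => ((A ∩ Q).card : ℤ) ≤ t)).card : ℝ) /
        ((Finset.powersetCard k (Finset.univ : Finset (Fin n))).card : ℝ)) ≤
    (((Finset.powersetCard k (Finset.univ : Finset (Fin n))).filter
          (fun A => s ≤ ((A ∩ P).card : ℤ) ∧ ((A ∩ Q).card : ℤ) ≤ t)).card : ℝ) /
      ((Finset.powersetCard k (Finset.univ : Finset (Fin n))).card : ℝ) := by
  have hNpos : 0 < ((Finset.powersetCard k (Finset.univ : Finset (Fin n))).card : ℝ) := by
    rw [card_powersetCard, card_univ, Fintype.card_fin]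
    exact_mod_cast Nat.choose_pos hkn
  by_cases ht : t < 0
  · have hG : (Finset.powersetCard k (Finset.univ : Finset (Fin n))).filter
        (fun A => ((A ∩ Q).card : ℤ) ≤ t) = ∅ := by
      apply filter_false_of_mem
      intro A _
      have : (0 : ℤ) ≤ ((A ∩ Q).card : ℤ) := Int.ofNat_nonneg _
      omega
    have hFG : (Finset.powersetCard k (Finset.univ : Finset (Fin n))).filter
        (fun A => s ≤ ((A ∩ P).card : ℤ) ∧ ((A ∩ Q).card : ℤ) ≤ t) = ∅ := by
      apply filter_false_of_mem
      intro A _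
      have : (0 : ℤ) ≤ ((A ∩ Q).card : ℤ) := Int.ofNat_nonneg _
      intro h
      omega
    rw [hG, hFG]
    simp
  · push_neg at ht
    have hFeq : (Finset.powersetCard k (Finset.univ : Finset (Fin n))).filter
        (fun A => s ≤ ((A ∩ P).card : ℤ)) =
        (Finset.powersetCard k (Finset.univ : Finset (Fin n))).filter
        (fun A => s.toNat ≤ (A ∩ P).card) := by
      apply filter_congr
      intro A _
      exact Int.toNat_le.symm
    have hGeq : (Finset.powersetCard k (Finset.univ : Finset (Fin n))).filter
        (fun A => ((A ∩ Q).card : ℤ) ≤ t) =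
        (Finset.powersetCard k (Finset.univ : Finset (Fin n))).filter
        (fun A => (A ∩ Q).card ≤ t.toNat) := by
      apply filter_congr
      intro A _
      exact (Int.le_toNat ht).symm
    have hFGeq : (Finset.powersetCard k (Finset.univ : Finset (Fin n))).filter
        (fun A => s ≤ ((A ∩ P).card : ℤ) ∧ ((A ∩ Q).card : ℤ) ≤ t) =
        (Finset.powersetCard k (Finset.univ : Finset (Fin n))).filter
        (fun A => s.toNat ≤ (A ∩ P).card ∧ (A ∩ Q).card ≤ t.toNat) := by
      apply filter_congr
      intro A _
      rw [← Int.toNat_le, ← Int.le_toNat ht]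
    rw [hFeq, hGeq, hFGeq]
    have key := stmt7_nat P Q hdisj s.toNat t.toNat (k := k)
    have keyR : ((((Finset.powersetCard k (Finset.univ : Finset (Fin n))).filter
          (fun A => s.toNat ≤ (A ∩ P).card)).card : ℝ) *
        (((Finset.powersetCard k (Finset.univ : Finset (Fin n))).filter
          (fun A => (A ∩ Q).card ≤ t.toNat)).card : ℝ)) ≤
        ((((Finset.powersetCard k (Finset.univ : Finset (Fin n))).filter
          (fun A => s.toNat ≤ (A ∩ P).card ∧ (A ∩ Q).card ≤ t.toNat)).card : ℝ) *
        ((Finset.powersetCard k (Finset.univ : Finset (Fin n))).card : ℝ)) := by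
      exact_mod_cast key
    rw [div_mul_div_comm, div_le_div_iff₀ (by positivity) hNpos]
    nlinarith [hNpos.le]
end

section
/- For every η > 0 there exists k₀ = k₀(η) such that the following holds. Let k ≥ k₀ and n be integers with k ≤ (1−η)n, let P ⊆ {1,…,n}, put p = |P|/n, and suppose η ≤ p ≤ 1−η. Let A be a uniformly random k-element subset of {1,…,n}. Then P[|A ∩ P| ≥ pk + 0.1η√k] ≥ 0.04η and P[|A ∩ P| ≤ pk − 0.1η√k] ≥ 0.04η. -/
/-!
Write `X = |A ∩ P|` and `g = n X - |P| k`. Double counting pairs `B ⊆ A ∩ P` gives the factorial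
moments `E (X)_r = (|P|)_r (k)_r / (n)_r`, hence closed forms for `E g²` and `E g⁴`; once
`Var X ≥ 1` they give the kurtosis bound `E g⁴ ≤ 4 (E g²)²`. For a mean-zero variable with this
bound, Hölder gives `E |g| ≥ σ / 2`, so `E g⁺ ≥ σ / 4`; the part of `E g⁺` coming from `{g < t}`
is at most `t`, and Hölder on `{g ≥ t}` then forces `P (g ≥ t) ≥ 1 / 50` when `t² ≤ σ² / 50`.
The hypotheses give `Var X ≥ η² k / 2`, which is at least `1` and at least `50 (0.1 η √k)²`
once `k ≥ 2 / η²`.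
-/

open Finset

section Anticoncentration

variable {ι : Type*} (s : Finset ι) (f : ι → ℝ)

theorem sum_sq_pow_three_le_sq_sum_abs_mul_sum_pow_four :
    (∑ i ∈ s, f i ^ 2) ^ 3 ≤ (∑ i ∈ s, |f i|) ^ 2 * ∑ i ∈ s, f i ^ 4 := by
  have h₁ : (∑ i ∈ s, f i ^ 2) ^ 2 ≤ (∑ i ∈ s, |f i|) * ∑ i ∈ s, |f i| ^ 3 :=
    sum_sq_le_sum_mul_sum_of_sq_le_mul s (fun i _ => abs_nonneg _) (fun i _ => by positivity)
      fun i _ => le_of_eq (by rw [← sq_abs (f i)]; ring)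
  have h₂ : (∑ i ∈ s, |f i| ^ 3) ^ 2 ≤ (∑ i ∈ s, f i ^ 2) * ∑ i ∈ s, f i ^ 4 :=
    sum_sq_le_sum_mul_sum_of_sq_le_mul s (fun i _ => by positivity) (fun i _ => by positivity)
      fun i _ => le_of_eq (by rw [← pow_mul, Even.pow_abs ⟨3, rfl⟩]; ring)
  have hS₂ : 0 ≤ ∑ i ∈ s, f i ^ 2 := sum_nonneg fun i _ => sq_nonneg _
  rcases hS₂.eq_or_lt with h | h
  · rw [← h, zero_pow three_ne_zero]; positivity
  · refine le_of_mul_le_mul_left ?_ h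
    calc (∑ i ∈ s, f i ^ 2) * (∑ i ∈ s, f i ^ 2) ^ 3 = ((∑ i ∈ s, f i ^ 2) ^ 2) ^ 2 := by ring
      _ ≤ ((∑ i ∈ s, |f i|) * ∑ i ∈ s, |f i| ^ 3) ^ 2 := pow_le_pow_left₀ (by positivity) h₁ 2
      _ = (∑ i ∈ s, |f i|) ^ 2 * (∑ i ∈ s, |f i| ^ 3) ^ 2 := by ring
      _ ≤ (∑ i ∈ s, |f i|) ^ 2 * ((∑ i ∈ s, f i ^ 2) * ∑ i ∈ s, f i ^ 4) := by gcongr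
      _ = _ := by ring

theorem sqrt_card_mul_sum_sq_le_two_mul_sum_abs
    (hkurt : #s * ∑ i ∈ s, f i ^ 4 ≤ 4 * (∑ i ∈ s, f i ^ 2) ^ 2) :
    √(#s * ∑ i ∈ s, f i ^ 2) ≤ 2 * ∑ i ∈ s, |f i| := by
  have hB : 0 ≤ ∑ i ∈ s, |f i| := sum_nonneg fun i _ => abs_nonneg _
  refine Real.sqrt_le_iff.mpr ⟨by positivity, ?_⟩
  have hHolder := sum_sq_pow_three_le_sq_sum_abs_mul_sum_pow_four s f
  rcases (sum_nonneg fun i _ => sq_nonneg (f i) : 0 ≤ ∑ i ∈ s, f i ^ 2).eq_or_lt with h | h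
  · rw [← h, mul_zero]; positivity
  · refine le_of_mul_le_mul_left ?_ (pow_pos h 2)
    nlinarith

theorem sum_abs_eq_two_mul_sum_max_zero (hmean : ∑ i ∈ s, f i = 0) :
    ∑ i ∈ s, |f i| = 2 * ∑ i ∈ s, max (f i) 0 := by
  have h : ∀ x : ℝ, |x| = 2 * max x 0 - x := fun x => by
    rcases le_total 0 x with hx | hx
    · rw [abs_of_nonneg hx, max_eq_left hx]; ring
    · rw [abs_of_nonpos hx, max_eq_right hx]; ring
  simp only [h, sum_sub_distrib, ← mul_sum, hmean, sub_zero]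

theorem sum_max_zero_le_mul_card_add_sum_filter {t : ℝ} (ht : 0 ≤ t) :
    ∑ i ∈ s, max (f i) 0 ≤ t * #s + ∑ i ∈ s with t ≤ f i, f i := by
  rw [← sum_filter_add_sum_filter_not s (fun i => t ≤ f i)]
  have hE : ∑ i ∈ s with t ≤ f i, max (f i) 0 = ∑ i ∈ s with t ≤ f i, f i :=
    sum_congr rfl fun i hi => max_eq_left (ht.trans (mem_filter.mp hi).2)
  have hEc : ∑ i ∈ s with ¬t ≤ f i, max (f i) 0 ≤ t * #s :=
    calc ∑ i ∈ s with ¬t ≤ f i, max (f i) 0 ≤ ∑ i ∈ s with ¬t ≤ f i, t :=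
          sum_le_sum fun i hi => max_le (not_le.mp (mem_filter.mp hi).2).le ht
      _ ≤ ∑ i ∈ s, t := sum_le_sum_of_subset_of_nonneg (filter_subset _ _) fun _ _ _ => ht
      _ = t * #s := by rw [sum_const, nsmul_eq_mul, mul_comm]
  linarith

theorem card_le_fifty_mul_card_filter_le {t : ℝ} (ht : 0 ≤ t) (hmean : ∑ i ∈ s, f i = 0)
    (hvar : 0 < ∑ i ∈ s, f i ^ 2)
    (hkurt : #s * ∑ i ∈ s, f i ^ 4 ≤ 4 * (∑ i ∈ s, f i ^ 2) ^ 2)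
    (hthr : 50 * #s * t ^ 2 ≤ ∑ i ∈ s, f i ^ 2) :
    (#s : ℝ) ≤ 50 * #{i ∈ s | t ≤ f i} := by
  have hσ_le_abs := sqrt_card_mul_sum_sq_le_two_mul_sum_abs s f hkurt
  have hpos_part := sum_max_zero_le_mul_card_add_sum_filter s f ht
  rw [sum_abs_eq_two_mul_sum_max_zero s f hmean] at hσ_le_abs
  set N : ℝ := (#s : ℝ)
  set S₂ := ∑ i ∈ s, f i ^ 2
  set S₄ := ∑ i ∈ s, f i ^ 4
  set E := {i ∈ s | t ≤ f i}
  set q : ℝ := (#E : ℝ)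
  set SE := ∑ i ∈ E, f i
  set σ := √(N * S₂)
  have hN : 0 < N := by simpa [N] using (nonempty_of_sum_ne_zero hvar.ne').card_pos
  have hσ : σ ^ 2 = N * S₂ := Real.sq_sqrt (by positivity)
  have htN : 7 * (t * N) ≤ σ := by
    have : 49 * (t * N) ^ 2 ≤ σ ^ 2 := by rw [hσ]; nlinarith
    nlinarith [mul_nonneg ht hN.le, Real.sqrt_nonneg (N * S₂)]
  have hSE₀ : 0 ≤ SE := sum_nonneg fun i hi => ht.trans (mem_filter.mp hi).2
  have hσ_le_SE : σ ≤ 10 * SE := by linarith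
  have hSE : SE ^ 4 ≤ q ^ 3 * S₄ :=
    calc SE ^ 4 ≤ q ^ 3 * ∑ i ∈ E, f i ^ 4 :=
          pow_sum_le_card_mul_sum_pow (fun i hi => ht.trans (mem_filter.mp hi).2) 3
      _ ≤ q ^ 3 * S₄ := by
          gcongr
          exact sum_le_sum_of_subset_of_nonneg (filter_subset _ _) fun _ _ _ => by positivity
  have hcube : N ^ 3 ≤ (50 * q) ^ 3 := by
    have : σ ^ 4 ≤ 10 ^ 4 * (q ^ 3 * S₄) :=
      calc σ ^ 4 ≤ (10 * SE) ^ 4 := pow_le_pow_left₀ (Real.sqrt_nonneg _) hσ_le_SE 4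
        _ ≤ 10 ^ 4 * (q ^ 3 * S₄) := by rw [mul_pow]; gcongr
    have hσ4 : σ ^ 4 = N ^ 2 * S₂ ^ 2 := by rw [show σ ^ 4 = (σ ^ 2) ^ 2 by ring, hσ]; ring
    refine le_of_mul_le_mul_right ?_ (pow_pos hvar 2)
    nlinarith [pow_nonneg (show (0:ℝ) ≤ q by positivity) 3]
  exact le_of_pow_le_pow_left₀ (by norm_num) (by positivity) hcube

theorem card_le_fifty_mul_card_filter_le_and_le_neg {t : ℝ} (ht : 0 ≤ t)
    (hmean : ∑ i ∈ s, f i = 0) (hvar : 0 < ∑ i ∈ s, f i ^ 2)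
    (hkurt : #s * ∑ i ∈ s, f i ^ 4 ≤ 4 * (∑ i ∈ s, f i ^ 2) ^ 2)
    (hthr : 50 * #s * t ^ 2 ≤ ∑ i ∈ s, f i ^ 2) :
    (#s : ℝ) ≤ 50 * #{i ∈ s | t ≤ f i} ∧ (#s : ℝ) ≤ 50 * #{i ∈ s | f i ≤ -t} := by
  refine ⟨card_le_fifty_mul_card_filter_le s f ht hmean hvar hkurt hthr, ?_⟩
  have h := card_le_fifty_mul_card_filter_le s (fun i => -f i) ht (by simp [hmean])
    (by simpa using hvar) (by simpa [Even.neg_pow (by decide : Even 4)] using hkurt)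
    (by simpa using hthr)
  simpa only [le_neg] using h

end Anticoncentration

/-- The left side is bilinear in `(a, b)`, so it suffices to check the four corners of the box;
`key` is the corresponding interpolation identity. -/
theorem five_mul_sub_six_mul_mul_le_of_mem_Icc {n a b : ℝ} (hn : 4 ≤ n)
    (ha : a ∈ Set.Icc (n - 1) (n ^ 2 / 4)) (hb : b ∈ Set.Icc (n - 1) (n ^ 2 / 4)) :
    (5 * n - 6) * a * b ≤ n ^ 2 * (n - 1) * (a + b - (n - 1)) := by
  obtain ⟨ha, ha'⟩ := ha
  obtain ⟨hb, hb'⟩ := hb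
  have key : (n ^ 2 * (n - 1) * (a + b - (n - 1)) - (5 * n - 6) * a * b)
      * (n ^ 2 / 4 - (n - 1)) ^ 2
      = ((n - 1) ^ 2 * (n - 2) * (n - 3)) * ((n ^ 2 / 4 - a) * (n ^ 2 / 4 - b))
      + (n ^ 2 * (n - 1) / 4 * (n - 2) * (n - 3)) *
          ((a - (n - 1)) * (n ^ 2 / 4 - b) + (n ^ 2 / 4 - a) * (b - (n - 1)))
      + (n ^ 2 * (n - 2) * (3 * n ^ 2 - 12 * n + 8) / 16) * ((a - (n - 1)) * (b - (n - 1))) := by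
    ring
  have hL : 0 < (n ^ 2 / 4 - (n - 1)) ^ 2 := pow_pos (by nlinarith) 2
  rw [← sub_nonneg]
  refine nonneg_of_mul_nonneg_left ?_ hL
  rw [key]
  have hn₁ : 0 ≤ n - 1 := by linarith
  have hn₂ : 0 ≤ n - 2 := by linarith
  have hn₃ : 0 ≤ n - 3 := by linarith
  have hq : 0 ≤ 3 * n ^ 2 - 12 * n + 8 := by nlinarith
  have hA : 0 ≤ a - (n - 1) := by linarith
  have hA' : 0 ≤ n ^ 2 / 4 - a := by linarith
  have hB : 0 ≤ b - (n - 1) := by linarith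
  have hB' : 0 ≤ n ^ 2 / 4 - b := by linarith
  have c₁ : 0 ≤ (n - 1) ^ 2 * (n - 2) * (n - 3) := mul_nonneg (mul_nonneg (sq_nonneg _) hn₂) hn₃
  have c₂ : 0 ≤ n ^ 2 * (n - 1) / 4 * (n - 2) * (n - 3) :=
    mul_nonneg (mul_nonneg (by positivity) hn₂) hn₃
  have c₃ : 0 ≤ n ^ 2 * (n - 2) * (3 * n ^ 2 - 12 * n + 8) / 16 := by positivity
  exact add_nonneg (add_nonneg (mul_nonneg c₁ (mul_nonneg hA' hB'))
    (mul_nonneg c₂ (add_nonneg (mul_nonneg hA hB') (mul_nonneg hA' hB))))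
    (mul_nonneg c₃ (mul_nonneg hA hB))

/-- `(n - 1)² (n - 2) (n - 3)` times the fourth central moment of a hypergeometric variable
with population `n`, where `a = k (n - k)` and `b = m (n - m)` for sample size `k` and `m`
marked elements. -/
noncomputable def hypergeometricFourthMomentNumerator (n a b : ℝ) : ℝ :=
  3 * a ^ 2 * b ^ 2 * (n - 2) * (n - 3) + a * b * n ^ 2 * (n - 1) * (n - 2) * (n - 3)
    - 6 * a * b * (n ^ 2 * (n - 1) * (a + b - (n - 1)) - (5 * n - 6) * a * b)

theorem hypergeometricFourthMomentNumerator_le {n a b : ℝ} (hn : 4 ≤ n) (ha : a ≤ n ^ 2 / 4)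
    (hb : b ≤ n ^ 2 / 4) (hb₀ : 0 ≤ b) (hab : n ^ 2 * (n - 1) ≤ a * b) :
    hypergeometricFourthMomentNumerator n a b ≤ 4 * a ^ 2 * b ^ 2 * (n - 2) * (n - 3) := by
  have hab₀ : 0 < a * b := lt_of_lt_of_le (by nlinarith) hab
  have hb' : 0 < b := hb₀.lt_of_ne (by rintro rfl; simp at hab₀)
  have ha' : 0 < a := (pos_iff_pos_of_mul_pos hab₀).2 hb'
  have ha₁ : n - 1 ≤ a := by nlinarith
  have hb₁ : n - 1 ≤ b := by nlinarith
  have hbr := sub_nonneg.2 (five_mul_sub_six_mul_mul_le_of_mem_Icc hn ⟨ha₁, ha⟩ ⟨hb₁, hb⟩)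
  have h23 : 0 ≤ a * b * ((n - 2) * (n - 3)) := by
    have : 0 ≤ (n - 2) * (n - 3) := mul_nonneg (by linarith) (by linarith)
    positivity
  rw [hypergeometricFourthMomentNumerator]
  nlinarith [mul_le_mul_of_nonneg_right hab h23, mul_nonneg hab₀.le hbr]

section Hypergeometric

variable {α : Type*} [Fintype α] [DecidableEq α]

theorem card_powersetCard_filter_superset {B : Finset α} {k : ℕ} (hBk : #B ≤ k) :
    #{A ∈ powersetCard k (univ : Finset α) | B ⊆ A} = (Fintype.card α - #B).choose (k - #B) := by
  rw [← card_compl, ← card_powersetCard]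
  refine card_bij' (fun A _ => A \ B) (fun C _ => C ∪ B) ?_ ?_ ?_ ?_
  · intro A hA
    obtain ⟨⟨-, hAk⟩, hBA⟩ := by simpa only [mem_filter, mem_powersetCard] using hA
    simp only [mem_powersetCard]
    exact ⟨fun x hx => mem_compl.2 (mem_sdiff.1 hx).2, by rw [card_sdiff_of_subset hBA, hAk]⟩
  · intro C hC
    obtain ⟨hCB, hCk⟩ := mem_powersetCard.1 hC
    have hdisj : Disjoint C B := subset_compl_iff_disjoint_right.1 hCB
    simp only [mem_filter, mem_powersetCard]
    exact ⟨⟨subset_univ _, by rw [card_union_of_disjoint hdisj, hCk]; omega⟩, subset_union_right⟩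
  · intro A hA
    exact sdiff_union_of_subset (mem_filter.1 hA).2
  · intro C hC
    exact union_sdiff_cancel_right (subset_compl_iff_disjoint_right.1 (mem_powersetCard.1 hC).1)

theorem sum_powersetCard_choose_card_inter (P : Finset α) {k r : ℕ} (hrk : r ≤ k) :
    ∑ A ∈ powersetCard k (univ : Finset α), (#(A ∩ P)).choose r
      = (#P).choose r * (Fintype.card α - r).choose (k - r) := by
  calc ∑ A ∈ powersetCard k univ, (#(A ∩ P)).choose r
      = ∑ A ∈ powersetCard k univ, #{B ∈ powersetCard r P | B ⊆ A} := by
        refine sum_congr rfl fun A _ => ?_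
        rw [← card_powersetCard]
        congr 1
        ext B
        simp only [mem_powersetCard, mem_filter, subset_inter_iff]
        tauto
    _ = ∑ B ∈ powersetCard r P, #{A ∈ powersetCard k univ | B ⊆ A} := by
        simp only [card_filter]
        exact sum_comm
    _ = ∑ B ∈ powersetCard r P, (Fintype.card α - r).choose (k - r) := by
        refine sum_congr rfl fun B hB => ?_
        obtain ⟨-, hBr⟩ := mem_powersetCard.1 hB
        rw [card_powersetCard_filter_superset (hBr ▸ hrk), hBr]
    _ = _ := by rw [sum_const, card_powersetCard, smul_eq_mul]

theorem sum_powersetCard_descFactorial_card_inter (P : Finset α) (k r : ℕ) :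
    (∑ A ∈ powersetCard k (univ : Finset α), (#(A ∩ P)).descFactorial r)
        * (Fintype.card α).descFactorial r
      = (Fintype.card α).choose k * ((#P).descFactorial r * k.descFactorial r) := by
  rcases lt_or_ge k r with hkr | hrk
  · have hA : ∀ A ∈ powersetCard k (univ : Finset α), (#(A ∩ P)).descFactorial r = 0 :=
      fun A hA => Nat.descFactorial_eq_zero_iff_lt.2 <|
        (card_le_card inter_subset_left).trans_lt ((mem_powersetCard.1 hA).2 ▸ hkr)
    rw [sum_eq_zero hA, Nat.descFactorial_eq_zero_iff_lt.2 hkr]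
    simp
  · simp only [Nat.descFactorial_eq_factorial_mul_choose, ← mul_sum,
      sum_powersetCard_choose_card_inter P hrk]
    calc r.factorial * ((#P).choose r * (Fintype.card α - r).choose (k - r))
          * (r.factorial * (Fintype.card α).choose r)
        = r.factorial * (#P).choose r * r.factorial
          * ((Fintype.card α).choose r * (Fintype.card α - r).choose (k - r)) := by ring
      _ = _ := by rw [← Nat.choose_mul hrk]; ring

theorem sum_powersetCard_sum_mul_descPochhammer_eval (P : Finset α) (k : ℕ) {d : ℕ}
    (c : Fin d → ℝ) :
    ∑ A ∈ powersetCard k (univ : Finset α), ∑ r, c r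
        * (descPochhammer ℝ r).eval (Fintype.card α : ℝ) * (descPochhammer ℝ r).eval (#(A ∩ P) : ℝ)
      = (Fintype.card α).choose k * ∑ r, c r
        * (descPochhammer ℝ r).eval (#P : ℝ) * (descPochhammer ℝ r).eval (k : ℝ) := by
  rw [sum_comm, mul_sum]
  refine sum_congr rfl fun r _ => ?_
  have h := congrArg (Nat.cast (R := ℝ)) (sum_powersetCard_descFactorial_card_inter P k r)
  push_cast at h
  simp only [descPochhammer_eval_eq_descFactorial, ← mul_sum]
  linear_combination c r * h

/-- `|α|` times the deviation of `|A ∩ P|` from its mean `|P| k / |α|` over `k`-subsets `A`. -/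
noncomputable def interCardDeviation (P : Finset α) (k : ℕ) (A : Finset α) : ℝ :=
  Fintype.card α * #(A ∩ P) - #P * k

/- In the next three proofs, `c r * (n)_r` is the coefficient of `(X)_r` in the expansion of the
left-hand summand (a polynomial in `X = |A ∩ P|`) in falling factorials. -/

theorem sum_interCardDeviation (P : Finset α) (k : ℕ) :
    ∑ A ∈ powersetCard k (univ : Finset α), interCardDeviation P k A = 0 := by
  obtain ⟨n, hn⟩ : ∃ n : ℝ, n = Fintype.card α := ⟨_, rfl⟩
  obtain ⟨m, hm⟩ : ∃ m : ℝ, m = #P := ⟨_, rfl⟩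
  have h := sum_powersetCard_sum_mul_descPochhammer_eval P k ![-m * k, 1]
  simp only [Fin.sum_univ_succ, Fin.sum_univ_zero, Matrix.cons_val_zero, Matrix.cons_val_succ,
    Fin.val_zero, Fin.val_succ, descPochhammer_succ_eval, descPochhammer_zero, Polynomial.eval_one,
    ← hn, ← hm] at h
  simp only [interCardDeviation, ← hn, ← hm]
  convert h using 1
  · exact sum_congr rfl fun A _ => by push_cast; ring
  · push_cast; ring

theorem sum_interCardDeviation_sq (P : Finset α) (k : ℕ) :
    (Fintype.card α - 1 : ℝ) * ∑ A ∈ powersetCard k (univ : Finset α), interCardDeviation P k A ^ 2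
      = (Fintype.card α).choose k
        * (k * (Fintype.card α - k) * (#P * (Fintype.card α - #P))) := by
  obtain ⟨n, hn⟩ : ∃ n : ℝ, n = Fintype.card α := ⟨_, rfl⟩
  obtain ⟨m, hm⟩ : ∃ m : ℝ, m = #P := ⟨_, rfl⟩
  have h := sum_powersetCard_sum_mul_descPochhammer_eval P k
    ![(n - 1) * m ^ 2 * k ^ 2, (n - 1) * (n - 2 * m * k), n]
  simp only [Fin.sum_univ_succ, Fin.sum_univ_zero, Matrix.cons_val_zero, Matrix.cons_val_succ,
    Fin.val_zero, Fin.val_succ, descPochhammer_succ_eval, descPochhammer_zero, Polynomial.eval_one,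
    ← hn, ← hm] at h
  simp only [interCardDeviation, ← hn, ← hm, mul_sum]
  convert h using 1
  · exact sum_congr rfl fun A _ => by push_cast; ring
  · push_cast; ring

theorem sum_interCardDeviation_pow_four (P : Finset α) (k : ℕ) :
    (Fintype.card α : ℝ) * (Fintype.card α - 1) ^ 2 * (Fintype.card α - 2) * (Fintype.card α - 3)
        * ∑ A ∈ powersetCard k (univ : Finset α), interCardDeviation P k A ^ 4
      = (Fintype.card α).choose k * Fintype.card α
        * hypergeometricFourthMomentNumerator (Fintype.card α) (k * (Fintype.card α - k))
          (#P * (Fintype.card α - #P)) := by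
  obtain ⟨n, hn⟩ : ∃ n : ℝ, n = Fintype.card α := ⟨_, rfl⟩
  obtain ⟨m, hm⟩ : ∃ m : ℝ, m = #P := ⟨_, rfl⟩
  have h := sum_powersetCard_sum_mul_descPochhammer_eval P k
    ![n * (n - 1) ^ 2 * (n - 2) * (n - 3) * m ^ 4 * k ^ 4,
      (n - 1) ^ 2 * (n - 2) * (n - 3)
        * (n ^ 4 - 4 * n ^ 3 * m * k + 6 * n ^ 2 * m ^ 2 * k ^ 2 - 4 * n * m ^ 3 * k ^ 3),
      (n - 1) * (n - 2) * (n - 3) * (7 * n ^ 4 - 12 * n ^ 3 * m * k + 6 * n ^ 2 * m ^ 2 * k ^ 2),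
      (n - 1) * (n - 3) * (6 * n ^ 4 - 4 * n ^ 3 * m * k),
      n ^ 4 * (n - 1)]
  simp only [Fin.sum_univ_succ, Fin.sum_univ_zero, Matrix.cons_val_zero, Matrix.cons_val_succ,
    Fin.val_zero, Fin.val_succ, descPochhammer_succ_eval, descPochhammer_zero, Polynomial.eval_one,
    ← hn, ← hm] at h
  simp only [interCardDeviation, hypergeometricFourthMomentNumerator, ← hn, ← hm, mul_sum]
  convert h using 1
  · exact sum_congr rfl fun A _ => by push_cast; ring
  · push_cast; ring

theorem card_mul_sum_interCardDeviation_pow_four_le (P : Finset α) (k : ℕ)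
    (hn : 4 ≤ Fintype.card α)
    (hvar : (Fintype.card α : ℝ) ^ 2 * (Fintype.card α - 1)
      ≤ k * (Fintype.card α - k) * (#P * (Fintype.card α - #P))) :
    ((Fintype.card α).choose k : ℝ)
        * ∑ A ∈ powersetCard k (univ : Finset α), interCardDeviation P k A ^ 4
      ≤ 4 * (∑ A ∈ powersetCard k (univ : Finset α), interCardDeviation P k A ^ 2) ^ 2 := by
  have h₂ := sum_interCardDeviation_sq P k
  have h₄ := sum_interCardDeviation_pow_four P k
  have hn₄ : (4 : ℝ) ≤ Fintype.card α := by exact_mod_cast hn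
  have hm : (#P : ℝ) ≤ Fintype.card α := by exact_mod_cast card_le_univ P
  set n : ℝ := (Fintype.card α : ℝ)
  set N : ℝ := ((Fintype.card α).choose k : ℝ)
  set a : ℝ := k * (n - k)
  set b : ℝ := #P * (n - #P)
  set S₂ := ∑ A ∈ powersetCard k (univ : Finset α), interCardDeviation P k A ^ 2
  set S₄ := ∑ A ∈ powersetCard k (univ : Finset α), interCardDeviation P k A ^ 4
  have hD : 0 < n * (n - 1) ^ 2 * (n - 2) * (n - 3) := by
    have : 0 < n - 3 := by linarith
    have : 0 < n - 2 := by linarith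
    have : 0 < n - 1 := by linarith
    positivity
  refine le_of_mul_le_mul_right ?_ hD
  calc N * S₄ * (n * (n - 1) ^ 2 * (n - 2) * (n - 3))
      = N * (N * n * hypergeometricFourthMomentNumerator n a b) := by rw [← h₄]; ring
    _ ≤ N * (N * n * (4 * a ^ 2 * b ^ 2 * (n - 2) * (n - 3))) := by
        gcongr
        exact hypergeometricFourthMomentNumerator_le hn₄ (by nlinarith [sq_nonneg (n - 2 * k)])
          (by nlinarith [sq_nonneg (n - 2 * #P)]) (mul_nonneg (Nat.cast_nonneg _) (sub_nonneg.2 hm))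
          hvar
    _ = 4 * S₂ ^ 2 * (n * (n - 1) ^ 2 * (n - 2) * (n - 3)) := by
        linear_combination (-4 * n * (n - 2) * (n - 3) * ((n - 1) * S₂ + N * a * b)) * h₂

theorem hypergeometric_anticoncentration (P : Finset α) (k : ℕ) {c : ℝ} (hc : 0 ≤ c)
    (hn : 4 ≤ Fintype.card α)
    (hvar : (Fintype.card α : ℝ) ^ 2 * (Fintype.card α - 1)
      ≤ k * (Fintype.card α - k) * (#P * (Fintype.card α - #P)))
    (hthr : 50 * c ^ 2 * ((Fintype.card α : ℝ) ^ 2 * (Fintype.card α - 1))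
      ≤ k * (Fintype.card α - k) * (#P * (Fintype.card α - #P))) :
    let Ω := powersetCard k (univ : Finset α)
    (#Ω : ℝ) ≤ 50 * #{A ∈ Ω | (#P : ℝ) / Fintype.card α * k + c ≤ #(A ∩ P)} ∧
      (#Ω : ℝ) ≤ 50 * #{A ∈ Ω | (#(A ∩ P) : ℝ) ≤ #P / Fintype.card α * k - c} := by
  intro Ω
  have h₂ := sum_interCardDeviation_sq P k
  have hkurt := card_mul_sum_interCardDeviation_pow_four_le P k hn hvar
  have hn₄ : (4 : ℝ) ≤ Fintype.card α := by exact_mod_cast hn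
  have hm : (#P : ℝ) ≤ Fintype.card α := by exact_mod_cast card_le_univ P
  have hΩ : (#Ω : ℝ) = (Fintype.card α).choose k := by
    simp only [Ω, card_powersetCard, card_univ]
  rw [← hΩ] at h₂ hkurt
  set n : ℝ := (Fintype.card α : ℝ)
  set ab := k * (n - k) * (#P * (n - #P))
  have hab : 0 < ab := lt_of_lt_of_le (by nlinarith) hvar
  have hN : 0 < (#Ω : ℝ) := by
    have hkn : (k : ℝ) < n := by
      by_contra! h
      exact hab.not_ge (mul_nonpos_of_nonpos_of_nonneg (mul_nonpos_of_nonneg_of_nonpos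
        (Nat.cast_nonneg _) (by linarith)) (mul_nonneg (Nat.cast_nonneg _) (by linarith)))
    rw [hΩ, Nat.cast_pos]
    exact Nat.choose_pos (Nat.cast_le.1 (hkn.le : (k : ℝ) ≤ Fintype.card α))
  have hS₂ : 0 < ∑ A ∈ Ω, interCardDeviation P k A ^ 2 :=
    pos_of_mul_pos_right (h₂ ▸ mul_pos hN hab) (by linarith)
  have hthr' : 50 * #Ω * (n * c) ^ 2 ≤ ∑ A ∈ Ω, interCardDeviation P k A ^ 2 := by
    refine le_of_mul_le_mul_left ?_ (show 0 < n - 1 by linarith)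
    rw [h₂]
    nlinarith [mul_le_mul_of_nonneg_left hthr hN.le]
  have hup : ∀ A : Finset α, n * c ≤ interCardDeviation P k A ↔ #P / n * k + c ≤ #(A ∩ P) := by
    intro A
    rw [interCardDeviation, show n * #(A ∩ P) - #P * k = n * (#(A ∩ P) - #P / n * k) by
      field_simp, mul_le_mul_iff_of_pos_left (by linarith)]
    constructor <;> intro <;> linarith
  have hdown : ∀ A : Finset α,
      interCardDeviation P k A ≤ -(n * c) ↔ (#(A ∩ P) : ℝ) ≤ #P / n * k - c := by
    intro A
    rw [interCardDeviation, show n * #(A ∩ P) - #P * k = n * (#(A ∩ P) - #P / n * k) by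
      field_simp, ← mul_neg, mul_le_mul_iff_of_pos_left (by linarith)]
    constructor <;> intro <;> linarith
  simpa only [hup, hdown] using card_le_fifty_mul_card_filter_le_and_le_neg Ω _
    (by positivity) (sum_interCardDeviation P k) hS₂ hkurt hthr'

end Hypergeometric

theorem mul_le_hypergeometric_variance {η n k m : ℝ} (hη : 0 ≤ η) (hη' : η ≤ 1 / 2)
    (hn : 0 ≤ n) (hk : 0 ≤ k) (hkn : k ≤ (1 - η) * n) (hm : η * n ≤ m) (hm' : m ≤ (1 - η) * n) :
    η ^ 2 * k * n ^ 3 / 2 ≤ k * (n - k) * (m * (n - m)) := by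
  have ha : η * n * k ≤ k * (n - k) := by
    nlinarith [mul_nonneg hk (show 0 ≤ (1 - η) * n - k by linarith)]
  have hb : η * n ^ 2 / 2 ≤ m * (n - m) := by
    nlinarith [mul_nonneg (sub_nonneg.2 hm) (sub_nonneg.2 hm'),
      mul_nonneg (mul_nonneg hη (sq_nonneg n)) (show 0 ≤ 1 / 2 - η by linarith)]
  calc η ^ 2 * k * n ^ 3 / 2 = (η * n * k) * (η * n ^ 2 / 2) := by ring
    _ ≤ k * (n - k) * (m * (n - m)) :=
        mul_le_mul ha hb (div_nonneg (mul_nonneg hη (sq_nonneg n)) zero_le_two)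
          ((mul_nonneg (mul_nonneg hη hn) hk).trans ha)

/-- Anti-concentration for the hypergeometric distribution: for every `η > 0`
there is `k₀` such that for all `k₀ ≤ k ≤ (1-η) n` and every `P ⊆ {1,…,n}` with
`η ≤ p := |P|/n ≤ 1-η`, a uniformly random `k`-subset `A` of `{1,…,n}` satisfies
`ℙ[|A ∩ P| ≥ pk + 0.1 η √k] ≥ 0.04 η` and `ℙ[|A ∩ P| ≤ pk − 0.1 η √k] ≥ 0.04 η`. -/
theorem stmt8 (η : ℝ) (hη : 0 < η) :
    ∃ k₀ : ℕ, ∀ k : ℕ, k₀ ≤ k → ∀ n : ℕ, (k : ℝ) ≤ (1 - η) * n →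
      ∀ P : Finset (Fin n),
        η ≤ (P.card : ℝ) / n → (P.card : ℝ) / n ≤ 1 - η →
        let Ω := Finset.powersetCard k (Finset.univ : Finset (Fin n))
        0.04 * η ≤
            ((Ω.filter (fun A => (P.card : ℝ) / n * k + 0.1 * η * Real.sqrt k ≤
                ((A ∩ P).card : ℝ))).card : ℝ) / (Ω.card : ℝ) ∧
        0.04 * η ≤
            ((Ω.filter (fun A => ((A ∩ P).card : ℝ) ≤
                (P.card : ℝ) / n * k - 0.1 * η * Real.sqrt k)).card : ℝ) / (Ω.card : ℝ) := by
  refine ⟨⌈2 / η ^ 2⌉₊, fun k hk n hkn P hp hp' => ?_⟩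
  dsimp only
  have hn : (0 : ℝ) < n :=
    Nat.cast_pos.2 <| Nat.pos_of_ne_zero <| by rintro rfl; simp at hp; linarith
  have hη' : η ≤ 1 / 2 := by linarith [hp.trans hp']
  have hk₂ : 2 ≤ η ^ 2 * k := (div_le_iff₀' (by positivity)).1 (Nat.ceil_le.1 hk)
  have hk₈ : 8 ≤ (k : ℝ) := by
    have : η ^ 2 ≤ 1 / 4 := by nlinarith
    nlinarith [mul_le_mul_of_nonneg_right this (Nat.cast_nonneg (α := ℝ) k)]
  have hkn' : (k : ℝ) ≤ n := by nlinarith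
  have hvar := mul_le_hypergeometric_variance hη.le hη' hn.le (Nat.cast_nonneg k) hkn
    ((le_div_iff₀ hn).1 hp) ((div_le_iff₀ hn).1 hp')
  have hn₃ : n ^ 3 ≤ η ^ 2 * k * n ^ 3 / 2 := by nlinarith [pow_pos hn 3]
  have hsqrt : Real.sqrt k ^ 2 = k := Real.sq_sqrt (Nat.cast_nonneg k)
  obtain ⟨hup, hdown⟩ := hypergeometric_anticoncentration P k (c := 0.1 * η * Real.sqrt k)
    (by positivity) (by simpa using (show (4 : ℝ) ≤ n by linarith))
    (by simp only [Fintype.card_fin]; nlinarith)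
    (by
      simp only [Fintype.card_fin, mul_pow, hsqrt]
      nlinarith [mul_nonneg (mul_nonneg (sq_nonneg η) (Nat.cast_nonneg (α := ℝ) k))
        (sq_nonneg (n : ℝ))])
  simp only [Fintype.card_fin] at hup hdown
  have hΩ : (0 : ℝ) < #(powersetCard k (univ : Finset (Fin n))) := by
    simpa using Nat.choose_pos (Nat.cast_le.1 hkn')
  have hηΩ := mul_le_mul_of_nonneg_right hη' hΩ.le
  exact ⟨by rw [le_div_iff₀ hΩ]; linarith, by rw [le_div_iff₀ hΩ]; linarith⟩
end

section
/- Let k ≥ 2, let n be divisible by k, let ρ ∈ [0,1] with ρn an integer, and consider the n-vertex bipartite construction with ratio ρ and parts X, Y (|X| = ρn), where all edges touching X are red and all edges inside Y are blue. Then: (1) writing |Y| = qk + r with 0 ≤ r < k, the largest number of blue edges in a K_k-factor equals q·C(k,2) + C(r,2); and (2) the largest number of red edges in a K_k-factor equals ( (k−1)/2 − ((k − ⌊kρ⌋ − 1)/2)·( ⌊kρ⌋/k + 1 − 2ρ ) )·n. -/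
/-- The spanning subgraph of `K_n` determined by a partition of the vertex set:
two vertices are adjacent iff they are distinct and lie in the same part. -/
def factorGraph {n : ℕ} (P : Finpartition (Finset.univ : Finset (Fin n))) :
    SimpleGraph (Fin n) where
  Adj u v := u ≠ v ∧ ∃ p ∈ P.parts, u ∈ p ∧ v ∈ p
  symm := by
    refine ⟨?_⟩
    rintro u v ⟨h, p, hp, hu, hv⟩
    exact ⟨Ne.symm h, p, hp, hv, hu⟩
  loopless := by
    refine ⟨?_⟩
    rintro v ⟨h, -⟩
    exact h rfl

/-- The number of edges of the graph `H` having color `b` under the red/blue-coloring `c`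
(`true` = red, `false` = blue). -/
noncomputable def colorCount {n : ℕ} (H : SimpleGraph (Fin n)) (c : Sym2 (Fin n) → Bool)
    (b : Bool) : ℕ :=
  {e | e ∈ H.edgeSet ∧ c e = b}.ncard

/-- The bipartite construction determined by the part `X`: an edge is red (`true`) iff it has
an endpoint in `X`, and blue (`false`) otherwise. -/
def bipColoring {n : ℕ} (X : Finset (Fin n)) : Sym2 (Fin n) → Bool :=
  Sym2.lift ⟨fun u v => decide (u ∈ X) || decide (v ∈ X), fun _ _ => Bool.or_comm _ _⟩

open Finset

variable {α : Type*} [DecidableEq α]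

lemma card_sym2_offdiag (s : Finset α) : (s.sym2.filter fun e => ¬ e.IsDiag).card = s.card.choose 2 := by
  have h1 : (s.sym2.filter fun e => e.IsDiag) = s.image Sym2.diag := by
    ext e
    induction e using Sym2.ind with
    | _ u v =>
      simp only [mem_filter, Finset.mk_mem_sym2_iff, Sym2.mk_isDiag_iff, mem_image]
      constructor
      · rintro ⟨⟨hu, hv⟩, rfl⟩; exact ⟨u, hu, rfl⟩
      · rintro ⟨a, ha, he⟩
        rw [Sym2.diag, Sym2.eq_iff] at he
        obtain ⟨rfl, rfl⟩ | ⟨rfl, rfl⟩ := he <;> exact ⟨⟨ha, ha⟩, rfl⟩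
  have h2 : (s.sym2.filter fun e => e.IsDiag).card = s.card := by
    rw [h1, Finset.card_image_of_injective _ Sym2.diag_injective]
  have h3 := Finset.card_filter_add_card_filter_not (s := s.sym2) (p := fun e => e.IsDiag)
  rw [Finset.card_sym2, h2] at h3
  have h4 : (s.card + 1).choose 2 = s.card.choose 2 + s.card := by
    rw [Nat.choose_succ_succ]
    simp [Nat.choose_one_right, Nat.add_comm]
  omega

instance {n : ℕ} (P : Finpartition (Finset.univ : Finset (Fin n))) :
    DecidableRel (factorGraph P).Adj := fun _ _ => inferInstanceAs (Decidable (_ ∧ _))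

lemma colorCount_eq_card {n : ℕ} (H : SimpleGraph (Fin n)) [DecidableRel H.Adj]
    (c : Sym2 (Fin n) → Bool) (b : Bool) :
    colorCount H c b = (H.edgeFinset.filter fun e => c e = b).card := by
  rw [colorCount, ← Set.ncard_coe_finset]
  congr 1
  ext e
  simp [SimpleGraph.mem_edgeFinset]

lemma factor_edgeFinset {n : ℕ} (P : Finpartition (Finset.univ : Finset (Fin n))) :
    (factorGraph P).edgeFinset
      = P.parts.biUnion (fun p => p.sym2.filter fun e => ¬ e.IsDiag) := by
  ext e
  induction e using Sym2.ind with
  | _ u v =>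
    rw [SimpleGraph.mem_edgeFinset]
    simp only [SimpleGraph.mem_edgeFinset, SimpleGraph.mem_edgeSet, mem_biUnion, mem_filter,
      Finset.mk_mem_sym2_iff, Sym2.mk_isDiag_iff, factorGraph]
    constructor
    · rintro ⟨hne, p, hp, hu, hv⟩; exact ⟨p, hp, ⟨hu, hv⟩, hne⟩
    · rintro ⟨p, hp, ⟨hu, hv⟩, hne⟩; exact ⟨hne, p, hp, hu, hv⟩

lemma sym2_pairwise_disjoint {n : ℕ} (P : Finpartition (Finset.univ : Finset (Fin n))) :
    ∀ p ∈ P.parts, ∀ q ∈ P.parts, p ≠ q →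
      Disjoint (p.sym2.filter fun e => ¬ e.IsDiag) (q.sym2.filter fun e => ¬ e.IsDiag) := by
  intro p hp q hq hpq
  rw [Finset.disjoint_left]
  intro e hep heq
  rw [mem_filter] at hep heq
  induction e using Sym2.ind with
  | _ u v =>
  have hu : u ∈ s(u,v) := Sym2.mem_mk_left u v
  have hup : u ∈ p := Finset.mem_sym2_iff.1 hep.1 u hu
  have huq : u ∈ q := Finset.mem_sym2_iff.1 heq.1 u hu
  exact (Finset.disjoint_left.1 (P.disjoint hp hq hpq) hup) huq

lemma blue_count {n : ℕ} (P : Finpartition (Finset.univ : Finset (Fin n))) (X : Finset (Fin n)) :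
    colorCount (factorGraph P) (bipColoring X) false
      = ∑ p ∈ P.parts, ((p \ X).card).choose 2 := by
  rw [colorCount_eq_card, factor_edgeFinset, Finset.filter_biUnion]
  rw [Finset.card_biUnion]
  · apply Finset.sum_congr rfl
    intro p _
    have : ((p.sym2.filter fun e => ¬ e.IsDiag).filter fun e => bipColoring X e = false)
        = ((p \ X).sym2.filter fun e => ¬ e.IsDiag) := by
      ext e
      induction e using Sym2.ind with
      | _ u v =>
        rw [mem_filter]
        simp only [mem_filter, Finset.mk_mem_sym2_iff, Sym2.mk_isDiag_iff, bipColoring,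
          Sym2.lift_mk, Bool.or_eq_false_iff, decide_eq_false_iff_not, Finset.mem_sdiff]
        tauto
    rw [this, card_sym2_offdiag]
  · intro p hp q hq hpq
    exact Finset.disjoint_filter_filter (sym2_pairwise_disjoint P p hp q hq hpq)

lemma red_add_blue {n : ℕ} (P : Finpartition (Finset.univ : Finset (Fin n))) (X : Finset (Fin n)) :
    colorCount (factorGraph P) (bipColoring X) true
      + colorCount (factorGraph P) (bipColoring X) false
      = ∑ p ∈ P.parts, (p.card).choose 2 := by
  rw [colorCount_eq_card, colorCount_eq_card]
  have h1 : ((factorGraph P).edgeFinset.filter fun e => bipColoring X e = true).card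
      + ((factorGraph P).edgeFinset.filter fun e => ¬ (bipColoring X e = true)).card
      = (factorGraph P).edgeFinset.card :=
    Finset.card_filter_add_card_filter_not _
  have h2 : ((factorGraph P).edgeFinset.filter fun e => ¬ (bipColoring X e = true))
      = ((factorGraph P).edgeFinset.filter fun e => bipColoring X e = false) := by
    apply Finset.filter_congr; intro e _; simp
  rw [h2] at h1
  rw [h1, factor_edgeFinset, Finset.card_biUnion (sym2_pairwise_disjoint P)]
  exact Finset.sum_congr rfl fun p _ => card_sym2_offdiag p

lemma choose_two_superadd (a b : ℕ) : a.choose 2 + b.choose 2 ≤ (a+b).choose 2 := by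
  rw [← @Nat.cast_le ℝ]
  push_cast [Nat.cast_choose_two]
  have ha : (0:ℝ) ≤ a := Nat.cast_nonneg a
  have hb : (0:ℝ) ≤ b := Nat.cast_nonneg b
  nlinarith [mul_nonneg ha hb]

lemma choose_two_merge {k y r : ℕ} (hy : y ≤ k) (hr : r ≤ k) (h : k ≤ r + y) :
    y.choose 2 + r.choose 2 ≤ k.choose 2 + (r + y - k).choose 2 := by
  rw [← @Nat.cast_le ℝ]
  push_cast [Nat.cast_choose_two, Nat.cast_sub h]
  have h1 : (y:ℝ) ≤ k := Nat.cast_le.2 hy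
  have h2 : (r:ℝ) ≤ k := Nat.cast_le.2 hr
  nlinarith [mul_nonneg (sub_nonneg.2 h1) (sub_nonneg.2 h2)]

lemma choose_two_tangent (y d : ℕ) : (d.choose 2 : ℝ) + ((y:ℝ) - d) * d ≤ y.choose 2 := by
  rw [Nat.cast_choose_two, Nat.cast_choose_two]
  rcases le_or_gt y d with h | h
  · have : (y:ℝ) ≤ d := Nat.cast_le.2 h
    have hy : (0:ℝ) ≤ y := Nat.cast_nonneg y
    nlinarith
  · have : (d:ℝ) + 1 ≤ y := by exact_mod_cast Nat.succ_le_of_lt h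
    have hd : (0:ℝ) ≤ d := Nat.cast_nonneg d
    nlinarith

lemma g_step {k : ℕ} (hk : 0 < k) {y : ℕ} (S : ℕ) (hy : y ≤ k) :
    y.choose 2 + ((S/k) * k.choose 2 + (S%k).choose 2)
      ≤ ((S+y)/k) * k.choose 2 + ((S+y)%k).choose 2 := by
  set q := S / k with hq
  set r := S % k with hr
  have hrk : r < k := Nat.mod_lt _ hk
  have hSqr : k * q + r = S := Nat.div_add_mod S k
  rcases lt_or_ge (r + y) k with hc | hc
  · have : (S+y) / k = q ∧ (S+y) % k = r + y :=
      (Nat.div_mod_unique hk).2 ⟨by omega, hc⟩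
    rw [this.1, this.2]
    have := choose_two_superadd r y
    omega
  · have : (S+y) / k = q + 1 ∧ (S+y) % k = r + y - k :=
      (Nat.div_mod_unique hk).2 ⟨by rw [Nat.mul_add, Nat.mul_one]; omega, by omega⟩
    rw [this.1, this.2, add_one_mul]
    have := choose_two_merge hy (le_of_lt hrk) hc
    have hry : r + y - k = y + r - k := by omega
    rw [hry] at this ⊢
    omega

lemma sum_choose_le {ι : Type*} {s : Finset ι} (f : ι → ℕ) {k : ℕ} (hk : 0 < k)
    (hf : ∀ i ∈ s, f i ≤ k) :
    ∑ i ∈ s, (f i).choose 2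
      ≤ ((∑ i ∈ s, f i)/k) * k.choose 2 + ((∑ i ∈ s, f i)%k).choose 2 := by
  induction s using Finset.cons_induction with
  | empty => simp
  | cons a s ha ih =>
    rw [Finset.sum_cons, Finset.sum_cons]
    have h1 := ih (fun i hi => hf i (Finset.mem_cons_of_mem hi))
    have h2 := g_step hk (∑ i ∈ s, f i) (hf a (Finset.mem_cons_self a s))
    rw [Nat.add_comm (f a) (∑ i ∈ s, f i)]
    omega

lemma build {n k : ℕ} (hk : 0 < k) :
    ∀ (l : List ℕ) (V X : Finset (Fin n)), X ⊆ V → X.card = l.sum →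
      V.card = l.length * k → (∀ a ∈ l, a ≤ k) →
      ∃ P : Finpartition V, (∀ p ∈ P.parts, p.card = k) ∧
        P.parts.val.map (fun p => (p ∩ X).card) = (l : Multiset ℕ) := by
  intro l
  induction l with
  | nil =>
    intro V X hXV hX hV _
    have hV0 : V = ∅ := Finset.card_eq_zero.1 (by simpa using hV)
    subst hV0
    refine ⟨(Finpartition.empty (Finset (Fin n))).copy Finset.bot_eq_empty, ?_, ?_⟩
    · intro p hp
      simp [Finpartition.copy, Finpartition.empty] at hp
    · simp [Finpartition.copy, Finpartition.empty]
  | cons a l ih =>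
    intro V X hXV hX hV hle
    have ha : a ≤ k := hle a List.mem_cons_self
    have hXc : X.card = a + l.sum := by simpa using hX
    have hsum : l.sum ≤ l.length * k := by
      have := List.sum_le_card_nsmul l k (fun x hx => hle x (List.mem_cons_of_mem a hx))
      simpa [smul_eq_mul, Nat.mul_comm] using this
    obtain ⟨A, hAX, hA⟩ := Finset.exists_subset_card_eq (show a ≤ X.card by omega)
    have hVX : X.card ≤ V.card := Finset.card_le_card hXV
    have hcard_sdiff : (V \ X).card = V.card - X.card := Finset.card_sdiff_of_subset hXV
    obtain ⟨B, hBV, hB⟩ := Finset.exists_subset_card_eq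
      (show k - a ≤ (V \ X).card by
        rw [hcard_sdiff, hV, hXc]; simp [List.length_cons, Nat.succ_mul]; omega)
    set p := A ∪ B with hp
    have hdisj : Disjoint A B := by
      have : Disjoint X (V \ X) := Finset.disjoint_sdiff
      exact (this.mono hAX hBV)
    have hpcard : p.card = k := by
      rw [hp, Finset.card_union_of_disjoint hdisj, hA, hB]; omega
    have hpV : p ⊆ V := Finset.union_subset (hAX.trans hXV) (hBV.trans Finset.sdiff_subset)
    have hpne : p ≠ (⊥ : Finset (Fin n)) := by
      intro h
      rw [Finset.bot_eq_empty] at h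
      have := hpcard
      rw [h] at this
      simp at this
      omega
    -- recursive call
    have hXA : X \ p = X \ A := by
      ext x
      simp only [Finset.mem_sdiff, hp, Finset.mem_union]
      constructor
      · rintro ⟨hx, h2⟩; exact ⟨hx, fun h => h2 (Or.inl h)⟩
      · rintro ⟨hx, h2⟩
        refine ⟨hx, fun h => ?_⟩
        rcases h with h | h
        · exact h2 h
        · exact (Finset.mem_sdiff.1 (hBV h)).2 hx
    have hX'sub : X \ p ⊆ V \ p := Finset.sdiff_subset_sdiff hXV (le_refl _)
    have hX'card : (X \ p).card = l.sum := by
      rw [hXA, Finset.card_sdiff_of_subset hAX, hA, hXc]; omega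
    have hV'card : (V \ p).card = l.length * k := by
      rw [Finset.card_sdiff_of_subset hpV, hpcard, hV]; simp [List.length_cons, Nat.succ_mul]
    obtain ⟨P', hP'k, hP'map⟩ := ih (V \ p) (X \ p) hX'sub hX'card hV'card
      (fun x hx => hle x (List.mem_cons_of_mem a hx))
    have hVsup : (V \ p) ⊔ p = V := by
      rw [Finset.sup_eq_union]
      exact Finset.sdiff_union_of_subset hpV
    refine ⟨P'.extend hpne Finset.sdiff_disjoint hVsup, ?_, ?_⟩
    · intro q hq
      rw [Finpartition.extend] at hq
      simp only [Finset.mem_insert] at hq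
      rcases hq with rfl | hq
      · exact hpcard
      · exact hP'k q hq
    · have hpnotmem : p ∉ P'.parts := by
        intro hmem
        have hsub : p ⊆ V \ p := P'.le hmem
        have : Disjoint p p := Finset.sdiff_disjoint.mono_left hsub
        rw [disjoint_self] at this
        exact hpne this
      have hparts : (P'.extend hpne Finset.sdiff_disjoint hVsup).parts = insert p P'.parts := rfl
      rw [hparts, Finset.insert_val, Multiset.ndinsert_of_notMem hpnotmem, Multiset.map_cons]
      have hpX : (p ∩ X).card = a := by
        have : p ∩ X = A := by
          ext x
          simp only [Finset.mem_inter, hp, Finset.mem_union]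
          constructor
          · rintro ⟨h1 | h1, h2⟩
            · exact h1
            · exact absurd h2 (Finset.mem_sdiff.1 (hBV h1)).2
          · intro h; exact ⟨Or.inl h, hAX h⟩
        rw [this, hA]
      rw [hpX]
      have : Multiset.map (fun q => (q ∩ X).card) P'.parts.val
          = Multiset.map (fun q => (q ∩ (X \ p)).card) P'.parts.val := by
        apply Multiset.map_congr rfl
        intro q hq
        have hqsub : q ⊆ V \ p := P'.le hq
        congr 1
        ext x
        simp only [Finset.mem_inter, Finset.mem_sdiff]
        constructor
        · intro ⟨h1, h2⟩
          exact ⟨h1, h2, (Finset.mem_sdiff.1 (hqsub h1)).2⟩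
        · rintro ⟨h1, h2, _⟩; exact ⟨h1, h2⟩
      rw [this, hP'map]
      rfl

lemma sum_parts_sdiff {n : ℕ} (P : Finpartition (Finset.univ : Finset (Fin n)))
    (X : Finset (Fin n)) : ∑ p ∈ P.parts, (p \ X).card = n - X.card := by
  have hbi : P.parts.biUnion (fun p => p \ X) = Finset.univ \ X := by
    ext x
    simp only [Finset.mem_biUnion, Finset.mem_sdiff, Finset.mem_univ, true_and]
    constructor
    · rintro ⟨p, _, hx⟩; exact hx.2
    · intro hx
      obtain ⟨p, hp, hxp⟩ := P.exists_mem (Finset.mem_univ x)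
      exact ⟨p, hp, hxp, hx⟩
  have hdisj : ∀ p ∈ P.parts, ∀ q ∈ P.parts, p ≠ q → Disjoint (p \ X) (q \ X) :=
    fun p hp q hq hpq => (P.disjoint hp hq hpq).mono Finset.sdiff_subset Finset.sdiff_subset
  rw [← Finset.card_biUnion hdisj, hbi, Finset.card_sdiff_of_subset (Finset.subset_univ X)]
  simp

lemma parts_card_mul {n k : ℕ} (P : Finpartition (Finset.univ : Finset (Fin n)))
    (hP : ∀ p ∈ P.parts, p.card = k) : P.parts.card * k = n := by
  have := P.sum_card_parts
  rw [Finset.sum_congr rfl hP] at this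
  simpa [Finset.card_univ] using this

lemma part_sdiff_card {n k : ℕ} {p X : Finset (Fin n)} (hp : p.card = k) :
    (p \ X).card = k - (p ∩ X).card := by
  have := Finset.card_sdiff_add_card_inter p X
  omega

lemma blue_of_build {n k : ℕ} (P : Finpartition (Finset.univ : Finset (Fin n)))
    (X : Finset (Fin n)) (l : List ℕ) (hP : ∀ p ∈ P.parts, p.card = k)
    (hmap : P.parts.val.map (fun p => (p ∩ X).card) = (l : Multiset ℕ)) :
    colorCount (factorGraph P) (bipColoring X) false
      = (l.map fun a => (k - a).choose 2).sum := by
  rw [blue_count]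
  rw [Finset.sum]
  have h1 : P.parts.val.map (fun p => ((p \ X).card).choose 2)
      = P.parts.val.map ((fun a => (k - a).choose 2) ∘ (fun p => (p ∩ X).card)) := by
    apply Multiset.map_congr rfl
    intro p hp
    simp only [Function.comp]
    rw [part_sdiff_card (hP p hp)]
  rw [h1, ← Multiset.map_map, hmap]
  simp

lemma total_red {n k : ℕ} (P : Finpartition (Finset.univ : Finset (Fin n)))
    (X : Finset (Fin n)) (hP : ∀ p ∈ P.parts, p.card = k) :
    colorCount (factorGraph P) (bipColoring X) true
      = P.parts.card * k.choose 2 - colorCount (factorGraph P) (bipColoring X) false := by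
  have := red_add_blue P X
  rw [Finset.sum_congr rfl (fun p hp => by rw [hP p hp])] at this
  rw [Finset.sum_const, smul_eq_mul] at this
  omega

lemma red_identity (K T M ρ S : ℝ) (hK : K ≠ 0) (hS : S = ρ * (M * K) - T * M) :
    M * (K * (K - 1) / 2)
      - (S * ((K - T - 1) * (K - T - 1 - 1) / 2) + (M - S) * ((K - T) * (K - T - 1) / 2))
    = ((K - 1) / 2 - (K - T - 1) / 2 * (T / K + 1 - 2 * ρ)) * (M * K) := by
  subst hS
  field_simp
  ring

lemma tangent_identity (C D M S : ℝ) (hD : D = C - 1) :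
    M * (D * (D - 1) / 2) + (M * C - S - M * D) * D
      = S * (D * (D - 1) / 2) + (M - S) * (C * (C - 1) / 2) := by
  subst hD
  ring

/-- For the `n`-vertex bipartite construction with ratio `ρ` and parts
`X, Xᶜ` (`|X| = ρ n`, edges touching `X` red, edges inside `Y = Xᶜ` blue), where `k ∣ n`:
(1) writing `|Y| = q k + r` with `0 ≤ r < k`, the largest number of blue edges in a
`K_k`-factor equals `q C(k,2) + C(r,2)`; and
(2) the largest number of red edges in a `K_k`-factor equals
`((k−1)/2 − ((k − ⌊kρ⌋ − 1)/2)(⌊kρ⌋/k + 1 − 2ρ)) n`. -/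
theorem stmt14 (k : ℕ) (hk : 2 ≤ k) (n : ℕ) (hdvd : k ∣ n)
    (ρ : ℝ) (hρ : ρ ∈ Set.Icc (0 : ℝ) 1) (X : Finset (Fin n)) (hX : (X.card : ℝ) = ρ * n) :
    IsGreatest {m : ℕ | ∃ P : Finpartition (Finset.univ : Finset (Fin n)),
        (∀ p ∈ P.parts, p.card = k) ∧ m = colorCount (factorGraph P) (bipColoring X) false}
      (((n - X.card) / k) * k.choose 2 + ((n - X.card) % k).choose 2) ∧
    IsGreatest {x : ℝ | ∃ P : Finpartition (Finset.univ : Finset (Fin n)),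
        (∀ p ∈ P.parts, p.card = k) ∧ x = (colorCount (factorGraph P) (bipColoring X) true : ℝ)}
      ((((k : ℝ) - 1) / 2 -
          ((k : ℝ) - (⌊(k : ℝ) * ρ⌋₊ : ℝ) - 1) / 2 *
            ((⌊(k : ℝ) * ρ⌋₊ : ℝ) / k + 1 - 2 * ρ)) * n) := by

  obtain ⟨hρ0, hρ1⟩ := hρ
  have hk0 : 0 < k := by omega
  set m := n / k with hm
  have hn : m * k = n := Nat.div_mul_cancel hdvd
  have hXn : X.card ≤ n := by
    have := Finset.card_le_univ X
    simpa using this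
  set B := n - X.card with hB
  set q := B / k with hq
  set r := B % k with hr
  have hqr : q * k + r = B := by rw [Nat.mul_comm]; exact Nat.div_add_mod B k
  have hrk : r < k := Nat.mod_lt _ hk0
  have hBn : B ≤ n := by omega
  have hqm : q ≤ m := by
    have h1 : q * k ≤ m * k := by omega
    exact Nat.le_of_mul_le_mul_right h1 hk0
  have huniv : (Finset.univ : Finset (Fin n)).card = n := by simp
  constructor
  · constructor
    · -- membership
      show ∃ P, _
      rcases Nat.eq_zero_or_pos r with hr0 | hr0
      · set l : List ℕ := List.replicate q 0 ++ List.replicate (m - q) k with hl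
        have hmq : (m - q) * k = m * k - q * k := Nat.sub_mul m q k
        have hsum : X.card = l.sum := by
          rw [hl]
          simp only [List.sum_append, List.sum_replicate, smul_eq_mul]
          omega
        have hlen : (Finset.univ : Finset (Fin n)).card = l.length * k := by
          rw [hl, huniv]
          simp only [List.length_append, List.length_replicate]
          have : q + (m - q) = m := by omega
          rw [this, hn]
        have hmem : ∀ a ∈ l, a ≤ k := by
          intro a ha
          rw [hl, List.mem_append, List.mem_replicate, List.mem_replicate] at ha
          omega
        obtain ⟨P, hPk, hPmap⟩ := build hk0 l Finset.univ X (Finset.subset_univ X) hsum hlen hmem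
        refine ⟨P, hPk, ?_⟩
        rw [blue_of_build P X l hPk hPmap, hl]
        simp only [List.map_append, List.map_replicate, List.sum_append, List.sum_replicate,
          smul_eq_mul, Nat.sub_zero, Nat.sub_self, Nat.choose_zero_succ, hr0]
        simp
      · have hqm' : q < m := by
          have h1 : q * k < m * k := by omega
          exact Nat.lt_of_mul_lt_mul_right h1
        set l : List ℕ := List.replicate q 0 ++ (k - r) :: List.replicate (m - q - 1) k with hl
        have e1 : (m - q - 1) + 1 = m - q := by omega
        have e2 : (m - q - 1) * k + k = (m - q) * k := by
          rw [← Nat.succ_mul, show (m-q-1).succ = m - q from e1]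
        have hmq : (m - q) * k = m * k - q * k := Nat.sub_mul m q k
        have hsum : X.card = l.sum := by
          rw [hl]
          simp only [List.sum_append, List.sum_replicate, List.sum_cons, smul_eq_mul]
          omega
        have hlen : (Finset.univ : Finset (Fin n)).card = l.length * k := by
          rw [hl, huniv]
          simp only [List.length_append, List.length_replicate, List.length_cons]
          have : q + (m - q - 1 + 1) = m := by omega
          rw [this, hn]
        have hmem : ∀ a ∈ l, a ≤ k := by
          intro a ha
          rw [hl, List.mem_append, List.mem_replicate, List.mem_cons] at ha
          rcases ha with h | h | h
          · omega
          · omega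
          · rw [List.mem_replicate] at h; omega
        obtain ⟨P, hPk, hPmap⟩ := build hk0 l Finset.univ X (Finset.subset_univ X) hsum hlen hmem
        refine ⟨P, hPk, ?_⟩
        rw [blue_of_build P X l hPk hPmap, hl]
        have hkr : k - (k - r) = r := by omega
        simp only [List.map_append, List.map_replicate, List.map_cons, List.sum_append,
          List.sum_cons, List.sum_replicate, smul_eq_mul, Nat.sub_zero, Nat.sub_self,
          Nat.choose_zero_succ, hkr]
        simp
    · -- upper bound
      rintro x ⟨P, hPk, rfl⟩
      rw [blue_count]
      have h1 := sum_choose_le (fun p => (p \ X).card) hk0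
        (fun p hp => by show (p \ X).card ≤ k; rw [part_sdiff_card (hPk p hp)]; omega)
      rw [sum_parts_sdiff P X] at h1
      exact h1
  · -- red part
    set t := ⌊(k:ℝ) * ρ⌋₊ with ht
    have hkR : (0:ℝ) < k := by positivity
    have hnR : (m:ℝ) * k = n := by exact_mod_cast hn
    have htk : t ≤ k := by
      have h1 : (k:ℝ) * ρ ≤ (k:ℝ) := mul_le_of_le_one_right (le_of_lt hkR) hρ1
      have h2 := Nat.floor_le_floor h1
      simpa using h2
    have htm : t * m ≤ X.card := by
      rcases Nat.eq_zero_or_pos n with hn0 | hn0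
      · have hm0 : m = 0 := by simp [hm, hn0]
        simp [hm0]
      · have h1 : (t:ℝ) ≤ (k:ℝ) * ρ := Nat.floor_le (by positivity)
        have h2 : (t:ℝ) * m * k ≤ (X.card:ℝ) * k := by
          calc (t:ℝ) * m * k = t * (m * k) := by ring
            _ ≤ ((k:ℝ) * ρ) * (m * k) := by
                apply mul_le_mul_of_nonneg_right h1
                positivity
            _ = (ρ * n) * k := by rw [hnR]; ring
            _ = (X.card:ℝ) * k := by rw [hX]
        have h3 : (t:ℝ) * m ≤ X.card := le_of_mul_le_mul_right h2 hkR
        exact_mod_cast h3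
    have hsm : X.card ≤ t * m + m := by
      rcases Nat.eq_zero_or_pos n with hn0 | hn0
      · have hX0 : X.card = 0 := by omega
        simp [hX0]
      · have h1 : (k:ℝ) * ρ < t + 1 := Nat.lt_floor_add_one _
        have hnRpos : (0:ℝ) < n := by exact_mod_cast hn0
        have h2 : (X.card:ℝ) * k < ((t:ℝ) * m + m) * k := by
          calc (X.card:ℝ) * k = ((k:ℝ) * ρ) * n := by rw [hX]; ring
            _ < ((t:ℝ) + 1) * n := by
                apply mul_lt_mul_of_pos_right h1 hnRpos
            _ = ((t:ℝ) * m + m) * k := by rw [← hnR]; ring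
        have h3 : (X.card:ℝ) < (t:ℝ) * m + m := lt_of_mul_lt_mul_right h2 (le_of_lt hkR)
        have h4 : (X.card:ℝ) < ((t * m + m : ℕ):ℝ) := by push_cast; exact h3
        exact le_of_lt (by exact_mod_cast h4)
    set s := X.card - t * m with hs
    have hsm' : s ≤ m := by omega
    have hscast : (s:ℝ) = (X.card:ℝ) - (t:ℝ) * m := by
      rw [hs, Nat.cast_sub htm]; push_cast; ring
    have hst : s ≠ 0 → t < k := by
      intro hs0
      by_contra hkt
      have htk' : t = k := by omega
      have : t * m = n := by rw [htk', Nat.mul_comm]; exact hn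
      omega
    have hs0k : t = k → s = 0 := by
      intro htk'
      have : t * m = n := by rw [htk', Nat.mul_comm]; exact hn
      omega
    set bv := s * (k - t - 1).choose 2 + (m - s) * (k - t).choose 2 with hbv
    -- the key identity
    have key : ((((k : ℝ) - 1) / 2 -
          ((k : ℝ) - (t : ℝ) - 1) / 2 * ((t : ℝ) / k + 1 - 2 * ρ)) * n)
        = (m:ℝ) * k.choose 2 - (bv:ℝ) := by
      rcases eq_or_lt_of_le htk with htk' | htk'
      · -- t = k
        have hs0 : s = 0 := hs0k htk'
        have hbv0 : bv = 0 := by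
          have hkt0 : k - t = 0 := by omega
          rw [hbv, hs0, hkt0]
          simp
        have hρ1' : ρ = 1 := by
          have h1 : (k:ℝ) ≤ (k:ℝ) * ρ := by
            have h2 : (t:ℝ) ≤ (k:ℝ) * ρ := Nat.floor_le (by positivity)
            rw [htk'] at h2
            exact_mod_cast h2
          nlinarith
        have htR : (t:ℝ) = k := by rw [htk']
        rw [hbv0, htR, hρ1', Nat.cast_choose_two]
        push_cast
        field_simp
        linear_combination (1 - (k:ℝ)) * hnR
      · -- t < k
        have hct : ((k - t : ℕ):ℝ) = (k:ℝ) - t := by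
          rw [Nat.cast_sub htk]
        have hdt : ((k - t - 1 : ℕ):ℝ) = (k:ℝ) - t - 1 := by
          rw [Nat.cast_sub (by omega : 1 ≤ k - t), hct]; push_cast; ring
        have hbvR : (bv:ℝ) = (s:ℝ) * (((k:ℝ) - t - 1) * (((k:ℝ) - t - 1) - 1) / 2)
            + ((m:ℝ) - s) * (((k:ℝ) - t) * (((k:ℝ) - t) - 1) / 2) := by
          rw [hbv]
          push_cast [Nat.cast_sub hsm', Nat.cast_choose_two, hct, hdt]
          ring
        have hS : (s:ℝ) = ρ * ((m:ℝ) * k) - (t:ℝ) * m := by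
          rw [hscast, hX, hnR]
        have hid := red_identity (k:ℝ) (t:ℝ) (m:ℝ) ρ (s:ℝ) (ne_of_gt hkR) hS
        rw [hbvR, Nat.cast_choose_two, ← hnR]
        linarith [hid]
    constructor
    · -- membership
      show ∃ P, _
      set l : List ℕ := List.replicate s (t+1) ++ List.replicate (m - s) t with hl
      have hmul1 : s * (t+1) = s * t + s := Nat.mul_succ s t
      have hmul2 : (m - s) * t = m * t - s * t := Nat.sub_mul m s t
      have hmul3 : s * t ≤ m * t := Nat.mul_le_mul_right t hsm'
      have hmul4 : t * m = m * t := Nat.mul_comm t m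
      have hsum : X.card = l.sum := by
        rw [hl]
        simp only [List.sum_append, List.sum_replicate, smul_eq_mul]
        omega
      have hlen : (Finset.univ : Finset (Fin n)).card = l.length * k := by
        rw [hl, huniv]
        simp only [List.length_append, List.length_replicate]
        have : s + (m - s) = m := by omega
        rw [this, hn]
      have hmem : ∀ a ∈ l, a ≤ k := by
        intro a ha
        rw [hl, List.mem_append, List.mem_replicate, List.mem_replicate] at ha
        rcases ha with ⟨hs0, rfl⟩ | ⟨-, rfl⟩
        · exact hst hs0
        · exact htk
      obtain ⟨P, hPk, hPmap⟩ := build hk0 l Finset.univ X (Finset.subset_univ X) hsum hlen hmem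
      refine ⟨P, hPk, ?_⟩
      have hblue : colorCount (factorGraph P) (bipColoring X) false = bv := by
        rw [blue_of_build P X l hPk hPmap, hl]
        simp only [List.map_append, List.map_replicate, List.sum_append, List.sum_replicate,
          smul_eq_mul]
        have hkt1 : k - (t+1) = k - t - 1 := by omega
        rw [hkt1, hbv]
      have hpc : P.parts.card = m := by
        have h1 := parts_card_mul P hPk
        have h2 : P.parts.card * k = m * k := by rw [h1, hn]
        exact Nat.eq_of_mul_eq_mul_right hk0 h2
      have htot := red_add_blue P X
      rw [Finset.sum_congr rfl (fun p hp => by rw [hPk p hp]), Finset.sum_const,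
        smul_eq_mul, hpc, hblue] at htot
      have hredR : (colorCount (factorGraph P) (bipColoring X) true : ℝ)
          = (m:ℝ) * k.choose 2 - bv := by
        have : (colorCount (factorGraph P) (bipColoring X) true : ℝ) + bv
            = (m:ℝ) * k.choose 2 := by exact_mod_cast congrArg (Nat.cast : ℕ → ℝ) htot
        linarith
      rw [key, hredR]
    · -- upper bound
      rintro x ⟨P, hPk, rfl⟩
      rw [key]
      have hpc : P.parts.card = m := by
        have h1 := parts_card_mul P hPk
        have h2 : P.parts.card * k = m * k := by rw [h1, hn]
        exact Nat.eq_of_mul_eq_mul_right hk0 h2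
      have htot := red_add_blue P X
      rw [Finset.sum_congr rfl (fun p hp => by rw [hPk p hp]), Finset.sum_const,
        smul_eq_mul, hpc] at htot
      have hblue : (bv:ℝ) ≤ (colorCount (factorGraph P) (bipColoring X) false : ℝ) := by
        rcases eq_or_lt_of_le htk with htk' | htk'
        · have hs0 : s = 0 := hs0k htk'
          have hbv0 : bv = 0 := by
            have hkt0 : k - t = 0 := by omega
            rw [hbv, hs0, hkt0]
            simp
          rw [hbv0]
          exact_mod_cast Nat.zero_le _
        · -- tangent bound
          set d := k - t - 1 with hd
          have hct : ((k - t : ℕ):ℝ) = (k:ℝ) - t := by rw [Nat.cast_sub htk]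
          have hdt : ((d : ℕ):ℝ) = (k:ℝ) - t - 1 := by
            rw [hd, Nat.cast_sub (by omega : 1 ≤ k - t), hct]; push_cast; ring
          rw [blue_count]
          push_cast
          have htan : ∀ p ∈ P.parts,
              (d.choose 2 : ℝ) + ((((p \ X).card):ℝ) - d) * d ≤ (((p \ X).card).choose 2 : ℝ) :=
            fun p _ => choose_two_tangent _ d
          have hsum1 : ∑ p ∈ P.parts, ((d.choose 2 : ℝ) + ((((p \ X).card):ℝ) - d) * d)
              ≤ ∑ p ∈ P.parts, (((p \ X).card).choose 2 : ℝ) := Finset.sum_le_sum htan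
          have hbig : ∑ p ∈ P.parts, ((d.choose 2 : ℝ) + ((((p \ X).card):ℝ) - d) * d)
              = (m:ℝ) * d.choose 2 + (((n - X.card : ℕ):ℝ) - (m:ℝ) * d) * d := by
            rw [Finset.sum_add_distrib, Finset.sum_const, nsmul_eq_mul, hpc]
            congr 1
            rw [← Finset.sum_mul]
            congr 1
            rw [Finset.sum_sub_distrib, Finset.sum_const, nsmul_eq_mul, hpc]
            congr 1
            rw [← Nat.cast_sum]
            exact_mod_cast congrArg (Nat.cast : ℕ → ℝ) (sum_parts_sdiff P X)
          have heq : (m:ℝ) * d.choose 2 + (((n - X.card : ℕ):ℝ) - (m:ℝ) * d) * d = (bv:ℝ) := by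
            have hBR : ((n - X.card : ℕ):ℝ) = (m:ℝ) * ((k - t:ℕ):ℝ) - (s:ℝ) := by
              rw [Nat.cast_sub hXn, hct, hscast, ← hnR]
              ring
            have hti := tangent_identity ((k - t:ℕ):ℝ) ((d:ℕ):ℝ) (m:ℝ) (s:ℝ)
              (by rw [hdt, hct])
            have hbvR : (bv:ℝ) = (s:ℝ) * (((d:ℕ):ℝ) * (((d:ℕ):ℝ) - 1) / 2)
                + ((m:ℝ) - (s:ℝ)) * (((k - t:ℕ):ℝ) * (((k - t:ℕ):ℝ) - 1) / 2) := by
              rw [hbv]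
              push_cast [Nat.cast_sub hsm', Nat.cast_choose_two]
              ring
            rw [hBR, hbvR, Nat.cast_choose_two]
            linear_combination hti
          rw [hbig, heq] at hsum1
          exact hsum1
      have hle : (colorCount (factorGraph P) (bipColoring X) true : ℝ)
          + (colorCount (factorGraph P) (bipColoring X) false : ℝ) = (m:ℝ) * k.choose 2 := by
        exact_mod_cast congrArg (Nat.cast : ℕ → ℝ) htot
      linarith
end

section
/- Let k ≥ 1 be an integer and let F be a 2-factor on n vertices. Then there exists a partition of V(F) into parts U₀, U₁, …, U_{⌊n/k⌋} such that |U_i| = k for all 1 ≤ i ≤ ⌊n/k⌋ (hence |U₀| < k), and such that for every 0 ≤ i ≤ ⌊n/k⌋, the subgraph of F induced by U_i is a vertex-disjoint union of cycles and at most 2 paths. In particular, for every 1 ≤ i ≤ ⌊n/k⌋, the subgraph of F induced by U_i has at least k − 2 edges. -/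
/-- A graph is a vertex-disjoint union of cycles and at most `2` paths: every vertex has
degree at most `2` (so every connected component is a path or a cycle), and at most `2`
connected components contain a vertex of degree at most `1` (i.e. are paths). -/
def CyclesAndAtMostTwoPaths {V : Type*} (H : SimpleGraph V) : Prop :=
  (∀ v, (H.neighborSet v).ncard ≤ 2) ∧
  {c : H.ConnectedComponent |
    ∃ v, H.connectedComponentMk v = c ∧ (H.neighborSet v).ncard ≤ 1}.ncard ≤ 2


open Finset in
theorem exists_orientation {n : ℕ} (F : SimpleGraph (Fin n))
    (hF : ∀ v, (F.neighborSet v).ncard = 2) :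
    ∃ σ : Fin n → Fin n, Function.Bijective σ ∧ (∀ v, σ v ≠ v) ∧ (∀ v, σ (σ v) ≠ v) ∧
      (∀ v w, σ v = σ w → v = w) ∧ (∀ v, F.Adj v (σ v)) := by
  classical
  -- degrees
  have hdeg : ∀ v, F.degree v = 2 := by
    intro v
    rw [← SimpleGraph.card_neighborSet_eq_degree, ← Nat.card_eq_fintype_card,
      Nat.card_coe_set_eq, hF]
  have hinc : ∀ v, (F.incidenceFinset v).card = 2 := by
    intro v; rw [SimpleGraph.card_incidenceFinset_eq_degree]; exact hdeg v
  -- Hall condition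
  have hall : ∀ s : Finset (Fin n), s.card ≤ (s.biUnion (F.incidenceFinset ·)).card := by
    intro s
    have key : ∀ e ∈ s.biUnion (F.incidenceFinset ·),
        (s.filter (fun v => e ∈ F.incidenceFinset v)).card ≤ 2 := by
      intro e _
      induction e with
      | h x y =>
        have : (s.filter (fun v => s(x,y) ∈ F.incidenceFinset v)) ⊆ {x, y} := by
          intro v hv
          simp only [mem_filter, SimpleGraph.mem_incidenceFinset] at hv
          have := hv.2.2
          simp only [Sym2.mem_iff] at this
          simp [this]
        calc _ ≤ ({x, y} : Finset (Fin n)).card := card_le_card this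
          _ ≤ 2 := card_insert_le _ _ |>.trans (by simp)
    have h1 : 2 * s.card = ∑ v ∈ s, (F.incidenceFinset v).card := by
      rw [Finset.sum_congr rfl (fun v _ => hinc v), Finset.sum_const, smul_eq_mul, mul_comm]
    have h2 : ∑ v ∈ s, (F.incidenceFinset v).card
        = ∑ e ∈ s.biUnion (F.incidenceFinset ·),
            (s.filter (fun v => e ∈ F.incidenceFinset v)).card := by
      have hsub : ∀ v ∈ s, F.incidenceFinset v
          = (s.biUnion (F.incidenceFinset ·)).filter (fun e => e ∈ F.incidenceFinset v) := by
        intro v hv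
        ext e
        simp only [Finset.mem_filter, Finset.mem_biUnion]
        exact ⟨fun he => ⟨⟨v, hv, he⟩, he⟩, fun h => h.2⟩
      rw [Finset.sum_congr rfl (fun v hv => by rw [hsub v hv, Finset.card_filter])]
      rw [Finset.sum_comm]
      exact Finset.sum_congr rfl (fun e _ => (Finset.card_filter _ _).symm)
    have h3 : ∑ e ∈ s.biUnion (F.incidenceFinset ·),
        (s.filter (fun v => e ∈ F.incidenceFinset v)).card
        ≤ 2 * (s.biUnion (F.incidenceFinset ·)).card := by
      calc _ ≤ ∑ _e ∈ s.biUnion (F.incidenceFinset ·), 2 := Finset.sum_le_sum key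
        _ = _ := by rw [Finset.sum_const, smul_eq_mul, mul_comm]
    omega
  obtain ⟨f, hfinj, hfmem⟩ :=
    (Finset.all_card_le_biUnion_card_iff_exists_injective (F.incidenceFinset ·)).mp hall
  have hmem : ∀ v, f v ∈ F.incidenceSet v := by
    intro v
    have := hfmem v
    rwa [SimpleGraph.mem_incidenceFinset] at this
  set σ : Fin n → Fin n := fun v => F.otherVertexOfIncident (hmem v) with hσdef
  have hspec : ∀ v, s(v, σ v) = f v := fun v => Sym2.other_spec' (hmem v).2
  have hadj : ∀ v, F.Adj v (σ v) := fun v => F.incidence_other_prop (hmem v)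
  have hne : ∀ v, σ v ≠ v := fun v => (hadj v).ne'
  have hss : ∀ v, σ (σ v) ≠ v := by
    intro v h
    have h1 : s(σ v, v) = f (σ v) := by have h1 := hspec (σ v); rwa [h] at h1
    have h2 : s(σ v, v) = f v := by rw [Sym2.eq_swap]; exact hspec v
    exact hne v (hfinj (h1 ▸ h2.symm ▸ rfl))
  have hinj : ∀ u w, σ u = σ w → u = w := by
    intro u w huw
    by_contra hne'
    set x := σ u with hx
    have hfu : f u ∈ F.incidenceFinset x := by
      rw [SimpleGraph.mem_incidenceFinset]
      exact ⟨(hmem u).1, by rw [← hspec u]; simp [← hx]⟩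
    have hfw : f w ∈ F.incidenceFinset x := by
      rw [SimpleGraph.mem_incidenceFinset]
      exact ⟨(hmem w).1, by rw [← hspec w]; simp [huw, ← hx]⟩
    have hfne : f u ≠ f w := fun h => hne' (hfinj h)
    have hpair : ({f u, f w} : Finset (Sym2 (Fin n))) ⊆ F.incidenceFinset x := by
      intro e he
      rcases Finset.mem_insert.mp he with h | h
      · exact h ▸ hfu
      · exact (Finset.mem_singleton.mp h) ▸ hfw
    have hcard : ({f u, f w} : Finset (Sym2 (Fin n))).card = 2 := by
      rw [Finset.card_insert_of_notMem (by simpa using hfne), Finset.card_singleton]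
    have heq : ({f u, f w} : Finset (Sym2 (Fin n))) = F.incidenceFinset x :=
      Finset.eq_of_subset_of_card_le hpair (by rw [hinc, hcard])
    have hfx : f x ∈ ({f u, f w} : Finset (Sym2 (Fin n))) := by
      rw [heq, SimpleGraph.mem_incidenceFinset]
      exact ⟨(hmem x).1, (hmem x).2⟩
    rcases Finset.mem_insert.mp hfx with h | h
    · exact hne u (hx ▸ hfinj h)
    · exact hne w (huw ▸ hx ▸ hfinj (Finset.mem_singleton.mp h))
  exact ⟨σ, Finite.injective_iff_bijective.mp (fun u w => hinj u w), hne, hss,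
    hinj, hadj⟩

theorem exists_perm {n : ℕ} (F : SimpleGraph (Fin n))
    (hF : ∀ v, (F.neighborSet v).ncard = 2) :
    ∃ σ : Equiv.Perm (Fin n), ∀ v, F.neighborSet v = {σ v, σ.symm v} := by
  obtain ⟨σf, hbij, hne, hss, hinj, hadj⟩ := exists_orientation F hF
  refine ⟨Equiv.ofBijective σf hbij, fun v => ?_⟩
  set σ := Equiv.ofBijective σf hbij with hσ
  have happ : ∀ w, σ w = σf w := fun w => rfl
  have hsub : ({σ v, σ.symm v} : Set (Fin n)) ⊆ F.neighborSet v := by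
    intro w hw
    rcases hw with rfl | hw
    · exact hadj v
    · rw [Set.mem_singleton_iff] at hw
      subst hw
      have h1 : F.Adj (σ.symm v) (σf (σ.symm v)) := hadj (σ.symm v)
      have h2 : σf (σ.symm v) = v := by
        rw [← happ, Equiv.apply_symm_apply]
      rw [h2] at h1
      exact h1.symm
  have hnepair : σ v ≠ σ.symm v := by
    intro hc
    apply hss v
    have : σ (σ v) = v := by
      rw [hc, Equiv.apply_symm_apply]
    simp only [happ] at this
    exact this
  exact (Set.eq_of_subset_of_ncard_le hsub
    (le_of_eq (by rw [hF v, Set.ncard_pair hnepair])) (Set.toFinite _)).symm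

/-- next index within cycle blocks -/
def nxt (st fn : ℕ → ℕ) (i : ℕ) : ℕ := if i = fn i then st i else i + 1
/-- previous index within cycle blocks -/
def prv (st fn : ℕ → ℕ) (i : ℕ) : ℕ := if i = st i then fn i else i - 1

structure CycData (n : ℕ) (F : SimpleGraph (Fin n)) (S : Finset (Fin n)) (m : ℕ) where
  ρ : ℕ → Fin n
  st : ℕ → ℕ
  fn : ℕ → ℕ
  mem : ∀ i < m, ρ i ∈ S
  inj : ∀ i < m, ∀ j < m, ρ i = ρ j → i = j
  surj : ∀ v ∈ S, ∃ i < m, ρ i = v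
  hst : ∀ i < m, st i ≤ i
  hfn : ∀ i < m, i ≤ fn i ∧ fn i < m
  hconst : ∀ i < m, ∀ j, st i ≤ j → j ≤ fn i → st j = st i ∧ fn j = fn i
  hnbr : ∀ i < m, F.neighborSet (ρ i) = {ρ (nxt st fn i), ρ (prv st fn i)}

theorem cycData_exists {n : ℕ} (hn : 0 < n) (F : SimpleGraph (Fin n))
    (σ : Equiv.Perm (Fin n)) (hσ : ∀ v, F.neighborSet v = {σ v, σ.symm v}) :
    ∀ m (S : Finset (Fin n)), S.card = m → (∀ v ∈ S, σ v ∈ S) →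
      Nonempty (CycData n F S m) := by
  intro m
  induction m using Nat.strong_induction_on with
  | _ m IH =>
    intro S hcard hinv
    rcases Nat.eq_zero_or_pos m with hm | hm
    · subst hm
      have hS : S = ∅ := Finset.card_eq_zero.mp hcard
      exact ⟨⟨fun _ => ⟨0, hn⟩, id, id,
        fun i hi => absurd hi (by omega), fun i hi => absurd hi (by omega),
        fun v hv => absurd hv (by simp [hS]),
        fun i hi => absurd hi (by omega), fun i hi => absurd hi (by omega),
        fun i hi => absurd hi (by omega), fun i hi => absurd hi (by omega)⟩⟩
    · obtain ⟨v, hv⟩ := Finset.card_pos.mp (show 0 < S.card by omega)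
      have hper : ∃ q, 0 < q ∧ (σ ^ q) v = v :=
        ⟨orderOf σ, orderOf_pos σ, by rw [pow_orderOf_eq_one]; rfl⟩
      obtain ⟨p, hppos, hpv, hpmin⟩ :
          ∃ p, 0 < p ∧ (σ ^ p) v = v ∧ ∀ q, 0 < q → q < p → (σ ^ q) v ≠ v :=
        ⟨Nat.find hper, (Nat.find_spec hper).1, (Nat.find_spec hper).2,
          fun q hq hlt hc => Nat.find_min hper hlt ⟨hq, hc⟩⟩
      have hstep : ∀ j, σ ((σ ^ j) v) = (σ ^ (j + 1)) v := by
        intro j; rw [pow_succ', Equiv.Perm.mul_apply]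
      have hwrap : σ ((σ ^ (p - 1)) v) = v := by
        rw [hstep, show p - 1 + 1 = p by omega, hpv]
      have hsymmstep : ∀ j, σ.symm ((σ ^ (j + 1)) v) = (σ ^ j) v := by
        intro j; rw [← hstep j, Equiv.symm_apply_apply]
      have hsymmv : σ.symm v = (σ ^ (p - 1)) v :=
        σ.injective (by rw [Equiv.apply_symm_apply, hwrap])
      -- orbit elements in S
      have horbS : ∀ j, (σ ^ j) v ∈ S := by
        intro j
        induction j with
        | zero => simpa using hv
        | succ j ih => rw [← hstep]; exact hinv _ ih
      -- orbit injectivity below p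
      have horbinj : ∀ j1 < p, ∀ j2 < p, (σ ^ j1) v = (σ ^ j2) v → j1 = j2 := by
        have key : ∀ j1 j2, j1 ≤ j2 → j2 < p → (σ ^ j1) v = (σ ^ j2) v → j1 = j2 := by
          intro j1 j2 hle hlt heq
          by_contra hne
          have h1 : (σ ^ j1) ((σ ^ (j2 - j1)) v) = (σ ^ j1) v := by
            rw [← Equiv.Perm.mul_apply, ← pow_add, show j1 + (j2 - j1) = j2 by omega]
            exact heq.symm
          have h2 : (σ ^ (j2 - j1)) v = v := (σ ^ j1).injective h1
          exact hpmin (j2 - j1) (by omega) (by omega) h2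
        intro j1 h1 j2 h2 heq
        rcases le_total j1 j2 with h | h
        · exact key j1 j2 h h2 heq
        · exact (key j2 j1 h h1 heq.symm).symm
      set O : Finset (Fin n) := (Finset.range p).image (fun j => (σ ^ j) v) with hO
      have hmemO : ∀ w, w ∈ O ↔ ∃ j < p, (σ ^ j) v = w := by
        intro w; simp [hO, Finset.mem_image]
      have hOcard : O.card = p := by
        rw [hO, Finset.card_image_of_injOn, Finset.card_range]
        intro a ha b hb
        simp only [Finset.mem_coe, Finset.mem_range] at ha hb
        exact horbinj a ha b hb
      have hOsub : O ⊆ S := by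
        intro w hw
        obtain ⟨j, _, rfl⟩ := (hmemO w).mp hw
        exact horbS j
      have hplem : p ≤ m := hcard ▸ hOcard ▸ Finset.card_le_card hOsub
      have hS'card : (S \ O).card = m - p := by
        rw [Finset.card_sdiff_of_subset hOsub, hcard, hOcard]
      have hS'inv : ∀ w ∈ S \ O, σ w ∈ S \ O := by
        intro w hw
        rw [Finset.mem_sdiff] at hw ⊢
        refine ⟨hinv w hw.1, fun hc => hw.2 ?_⟩
        rw [hmemO] at hc ⊢
        obtain ⟨j, hj, hjeq⟩ := hc
        rcases Nat.eq_zero_or_pos j with rfl | hjpos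
        · refine ⟨p - 1, by omega, σ.injective ?_⟩
          rw [hwrap]
          simpa using hjeq
        · refine ⟨j - 1, by omega, σ.injective ?_⟩
          rw [hstep, show j - 1 + 1 = j by omega]
          exact hjeq
      obtain ⟨D⟩ := IH (m - p) (by omega) (S \ O) hS'card hS'inv
      have hDmem : ∀ i < m - p, D.ρ i ∈ S ∧ D.ρ i ∉ O :=
        fun i hi => Finset.mem_sdiff.mp (D.mem i hi)
      set ρ' : ℕ → Fin n := fun i => if i < p then (σ ^ i) v else D.ρ (i - p) with hρ'
      set st' : ℕ → ℕ := fun i => if i < p then 0 else D.st (i - p) + p with hst'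
      set fn' : ℕ → ℕ := fun i => if i < p then p - 1 else D.fn (i - p) + p with hfn'
      have hρlt : ∀ i, i < p → ρ' i = (σ ^ i) v := fun i h => by simp [hρ', h]
      have hρge : ∀ i, ¬ i < p → ρ' i = D.ρ (i - p) := fun i h => by simp [hρ', h]
      have hstlt : ∀ i, i < p → st' i = 0 := fun i h => by simp [hst', h]
      have hstge : ∀ i, ¬ i < p → st' i = D.st (i - p) + p := fun i h => by simp [hst', h]
      have hfnlt : ∀ i, i < p → fn' i = p - 1 := fun i h => by simp [hfn', h]
      have hfnge : ∀ i, ¬ i < p → fn' i = D.fn (i - p) + p := fun i h => by simp [hfn', h]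
      refine ⟨⟨ρ', st', fn', ?_, ?_, ?_, ?_, ?_, ?_, ?_⟩⟩
      · intro i hi
        by_cases h : i < p
        · rw [hρlt i h]; exact horbS i
        · rw [hρge i h]; exact (hDmem (i - p) (by omega)).1
      · intro i hi j hj heq
        by_cases h1 : i < p <;> by_cases h2 : j < p
        · rw [hρlt i h1, hρlt j h2] at heq
          exact horbinj i h1 j h2 heq
        · rw [hρlt i h1, hρge j h2] at heq
          exact absurd ((hmemO _).mpr ⟨i, h1, heq⟩) (hDmem (j - p) (by omega)).2
        · rw [hρge i h1, hρlt j h2] at heq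
          exact absurd ((hmemO _).mpr ⟨j, h2, heq.symm⟩) (hDmem (i - p) (by omega)).2
        · rw [hρge i h1, hρge j h2] at heq
          have := D.inj (i - p) (by omega) (j - p) (by omega) heq
          omega
      · intro w hw
        by_cases h : w ∈ O
        · obtain ⟨j, hj, hjeq⟩ := (hmemO w).mp h
          exact ⟨j, by omega, by rw [hρlt j hj]; exact hjeq⟩
        · obtain ⟨i, hi, hieq⟩ := D.surj w (Finset.mem_sdiff.mpr ⟨hw, h⟩)
          refine ⟨i + p, by omega, ?_⟩
          rw [hρge (i + p) (by omega), show i + p - p = i by omega]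
          exact hieq
      · intro i hi
        by_cases h : i < p
        · rw [hstlt i h]; omega
        · rw [hstge i h]
          have := D.hst (i - p) (by omega)
          omega
      · intro i hi
        by_cases h : i < p
        · rw [hfnlt i h]; omega
        · rw [hfnge i h]
          have := D.hfn (i - p) (by omega)
          omega
      · intro i hi j hj1 hj2
        by_cases h : i < p
        · rw [hstlt i h] at hj1
          rw [hfnlt i h] at hj2
          have hjp : j < p := by omega
          rw [hstlt i h, hfnlt i h, hstlt j hjp, hfnlt j hjp]
          exact ⟨rfl, rfl⟩
        · rw [hstge i h] at hj1
          rw [hfnge i h] at hj2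
          have hjp : ¬ j < p := by omega
          have hD := D.hconst (i - p) (by omega) (j - p) (by omega) (by omega)
          rw [hstge i h, hfnge i h, hstge j hjp, hfnge j hjp]
          omega
      · intro i hi
        by_cases h : i < p
        · have h1 : ρ' (nxt st' fn' i) = σ ((σ ^ i) v) := by
            unfold nxt
            rw [hfnlt i h, hstlt i h]
            by_cases hend : i = p - 1
            · rw [if_pos hend, hend, hwrap, hρlt 0 hppos, pow_zero]
              rfl
            · rw [if_neg hend, hρlt (i + 1) (by omega), hstep]
          have h2 : ρ' (prv st' fn' i) = σ.symm ((σ ^ i) v) := by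
            unfold prv
            rw [hfnlt i h, hstlt i h]
            by_cases hbeg : i = 0
            · rw [if_pos hbeg, hbeg, pow_zero, hρlt (p - 1) (by omega)]
              rw [show (1 : Equiv.Perm (Fin n)) v = v from rfl, hsymmv]
            · rw [if_neg hbeg, hρlt (i - 1) (by omega),
                show (σ ^ i) v = (σ ^ (i - 1 + 1)) v by rw [show i - 1 + 1 = i by omega], hsymmstep]
          rw [hρlt i h, hσ, h1, h2]
        · have hD := D.hnbr (i - p) (by omega)
          have hDst := D.hst (i - p) (by omega)
          have h1 : ρ' (nxt st' fn' i) = D.ρ (nxt D.st D.fn (i - p)) := by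
            unfold nxt
            rw [hfnge i h, hstge i h]
            by_cases hend : i - p = D.fn (i - p)
            · rw [if_pos (by omega : i = D.fn (i - p) + p), if_pos hend,
                hρge _ (by omega : ¬ D.st (i - p) + p < p),
                show D.st (i - p) + p - p = D.st (i - p) by omega]
            · rw [if_neg (by omega : ¬ i = D.fn (i - p) + p), if_neg hend,
                hρge (i + 1) (by omega), show i + 1 - p = i - p + 1 by omega]
          have h2 : ρ' (prv st' fn' i) = D.ρ (prv D.st D.fn (i - p)) := by
            unfold prv
            rw [hstge i h, hfnge i h]
            by_cases hbeg : i - p = D.st (i - p)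
            · rw [if_pos (by omega : i = D.st (i - p) + p), if_pos hbeg,
                hρge _ (by omega : ¬ D.fn (i - p) + p < p),
                show D.fn (i - p) + p - p = D.fn (i - p) by omega]
            · rw [if_neg (by omega : ¬ i = D.st (i - p) + p), if_neg hbeg,
                hρge (i - 1) (by omega), show i - 1 - p = i - p - 1 by omega]
          rw [hρge i h, hD, h1, h2]
section Blocks

variable {n : ℕ} {F : SimpleGraph (Fin n)}

lemma induce_deg_le (hF : ∀ v, (F.neighborSet v).ncard = 2) (s : Set (Fin n)) (v : s) :
    ((F.induce s).neighborSet v).ncard ≤ 2 := by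
  have h1 : Subtype.val '' ((F.induce s).neighborSet v) ⊆ F.neighborSet ↑v := by
    rintro _ ⟨w, hw, rfl⟩
    exact hw
  calc ((F.induce s).neighborSet v).ncard
      = (Subtype.val '' ((F.induce s).neighborSet v)).ncard :=
        (Set.ncard_image_of_injective _ Subtype.val_injective).symm
    _ ≤ (F.neighborSet ↑v).ncard := Set.ncard_le_ncard h1 (Set.toFinite _)
    _ = 2 := hF ↑v

variable (D : CycData n F Finset.univ n)

lemma adj_nxt : ∀ i < n, F.Adj (D.ρ i) (D.ρ (nxt D.st D.fn i)) := by
  intro i hi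
  have : D.ρ (nxt D.st D.fn i) ∈ F.neighborSet (D.ρ i) := by
    rw [D.hnbr i hi]; left; rfl
  exact this

lemma nxt_ne_prv (hF : ∀ v, (F.neighborSet v).ncard = 2) : ∀ i < n, D.ρ (nxt D.st D.fn i) ≠ D.ρ (prv D.st D.fn i) := by
  intro i hi heq
  have h2 : (F.neighborSet (D.ρ i)).ncard = 2 := hF _
  rw [D.hnbr i hi, heq, Set.pair_eq_singleton, Set.ncard_singleton] at h2
  omega

/-- walk along consecutive indices -/
lemma reach_run (s : Set (Fin n)) (a : ℕ) :
    ∀ i, a ≤ i →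
      (∀ j, a ≤ j → j < i → F.Adj (D.ρ j) (D.ρ (j + 1))) →
      (∀ j, a ≤ j → j ≤ i → D.ρ j ∈ s) →
      ∀ (hx : D.ρ a ∈ s) (hy : D.ρ i ∈ s),
        (F.induce s).Reachable ⟨D.ρ a, hx⟩ ⟨D.ρ i, hy⟩ := by
  intro i hai
  induction i, hai using Nat.le_induction with
  | base =>
    intro _ _ hx hy
    rfl
  | succ i hai IH =>
    intro hadj hmem hx hy
    have h1 : (F.induce s).Reachable ⟨D.ρ a, hx⟩ ⟨D.ρ i, hmem i hai (by omega)⟩ :=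
      IH (fun j h1 h2 => hadj j h1 (by omega)) (fun j h1 h2 => hmem j h1 (by omega)) hx _
    refine h1.trans ?_
    have hadj' : (F.induce s).Adj ⟨D.ρ i, hmem i hai (by omega)⟩ ⟨D.ρ (i + 1), hy⟩ := by
      show F.Adj (D.ρ i) (D.ρ (i + 1))
      exact hadj i hai (by omega)
    exact hadj'.reachable

lemma block_two_paths (hF : ∀ v, (F.neighborSet v).ncard = 2) (a b : ℕ) (hbn : b ≤ n) :
    {c : (F.induce ↑((Finset.Ico a b).image D.ρ)).ConnectedComponent |
      ∃ v, (F.induce ↑((Finset.Ico a b).image D.ρ)).connectedComponentMk v = c ∧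
        ((F.induce ↑((Finset.Ico a b).image D.ρ)).neighborSet v).ncard ≤ 1}.ncard ≤ 2 := by
  set s : Set (Fin n) := ↑((Finset.Ico a b).image D.ρ) with hs
  have hmemU : ∀ w : Fin n, w ∈ s ↔ ∃ i, a ≤ i ∧ i < b ∧ D.ρ i = w := by
    intro w
    simp [hs, Finset.mem_image, Finset.mem_Ico, and_assoc]
  by_cases hab : a < b
  · have hma : D.ρ a ∈ s := (hmemU _).mpr ⟨a, le_refl a, hab, rfl⟩
    have hmb : D.ρ (b - 1) ∈ s := (hmemU _).mpr ⟨b - 1, by omega, by omega, rfl⟩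
    have hreach : ∀ v : s, ((F.induce s).neighborSet v).ncard ≤ 1 →
        (F.induce s).Reachable v ⟨D.ρ a, hma⟩ ∨
        (F.induce s).Reachable v ⟨D.ρ (b - 1), hmb⟩ := by
      intro v hlow
      obtain ⟨i, hai, hib, hρi⟩ := (hmemU ↑v).mp v.2
      have hin : i < n := by omega
      have hVi : v = ⟨D.ρ i, (hmemU _).mpr ⟨i, hai, hib, rfl⟩⟩ := Subtype.ext hρi.symm
      have hfni := D.hfn i hin
      have hsti := D.hst i hin
      by_cases hcase : a ≤ D.st i ∧ D.fn i < b
      · exfalso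
        -- both neighbors inside the block: degree 2
        have hnxtmem : D.ρ (nxt D.st D.fn i) ∈ s := by
          refine (hmemU _).mpr ⟨nxt D.st D.fn i, ?_, ?_, rfl⟩ <;> unfold nxt <;>
            split <;> omega
        have hprvmem : D.ρ (prv D.st D.fn i) ∈ s := by
          refine (hmemU _).mpr ⟨prv D.st D.fn i, ?_, ?_, rfl⟩ <;> unfold prv <;>
            split <;> omega
        have hx1 : (F.induce s).Adj v ⟨D.ρ (nxt D.st D.fn i), hnxtmem⟩ := by
          show F.Adj ↑v (D.ρ (nxt D.st D.fn i))
          rw [← hρi]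
          exact adj_nxt D i hin
        have hx2 : (F.induce s).Adj v ⟨D.ρ (prv D.st D.fn i), hprvmem⟩ := by
          show F.Adj ↑v (D.ρ (prv D.st D.fn i))
          rw [← hρi]
          have : D.ρ (prv D.st D.fn i) ∈ F.neighborSet (D.ρ i) := by
            rw [D.hnbr i hin]; right; rfl
          exact this
        have hne : (⟨D.ρ (nxt D.st D.fn i), hnxtmem⟩ : s) ≠ ⟨D.ρ (prv D.st D.fn i), hprvmem⟩ :=
          fun hc => nxt_ne_prv D hF i hin (congrArg Subtype.val hc)
        have : 1 < ((F.induce s).neighborSet v).ncard := by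
          rw [Set.one_lt_ncard_iff (Set.toFinite _)]
          exact ⟨_, _, hx1, hx2, hne⟩
        omega
      · rcases not_and_or.mp hcase with hlt | hge
        · -- start of cycle block before a : reach ρ a
          left
          rw [hVi]
          have hconst : ∀ j, a ≤ j → j ≤ i → D.st j = D.st i ∧ D.fn j = D.fn i :=
            fun j h1 h2 => D.hconst i hin j (by omega) (by omega)
          have hadjs : ∀ j, a ≤ j → j < i → F.Adj (D.ρ j) (D.ρ (j + 1)) := by
            intro j h1 h2
            have hjfn : j ≠ D.fn j := by
              have := (hconst j h1 (by omega)).2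
              omega
            have := adj_nxt D j (by omega)
            unfold nxt at this
            rwa [if_neg hjfn] at this
          exact (reach_run D s a i hai hadjs
            (fun j h1 h2 => (hmemU _).mpr ⟨j, h1, by omega, rfl⟩) hma _).symm
        · -- end of cycle block at/after b : reach ρ (b-1)
          right
          rw [hVi]
          push_neg at hge
          have hconst : ∀ j, i ≤ j → j ≤ b - 1 → D.st j = D.st i ∧ D.fn j = D.fn i :=
            fun j h1 h2 => D.hconst i hin j (by omega) (by omega)
          have hadjs : ∀ j, i ≤ j → j < b - 1 → F.Adj (D.ρ j) (D.ρ (j + 1)) := by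
            intro j h1 h2
            have hjfn : j ≠ D.fn j := by
              have := (hconst j h1 (by omega)).2
              omega
            have := adj_nxt D j (by omega)
            unfold nxt at this
            rwa [if_neg hjfn] at this
          exact reach_run D s i (b - 1) (by omega) hadjs
            (fun j h1 h2 => (hmemU _).mpr ⟨j, by omega, by omega, rfl⟩)
            ((hmemU _).mpr ⟨i, hai, hib, rfl⟩) _
    have hsub : {c : (F.induce s).ConnectedComponent |
        ∃ v, (F.induce s).connectedComponentMk v = c ∧
          ((F.induce s).neighborSet v).ncard ≤ 1} ⊆
        {(F.induce s).connectedComponentMk ⟨D.ρ a, hma⟩,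
         (F.induce s).connectedComponentMk ⟨D.ρ (b - 1), hmb⟩} := by
      rintro c ⟨v, hvc, hlow⟩
      rcases hreach v hlow with h | h
      · left
        rw [← hvc]
        exact SimpleGraph.ConnectedComponent.eq.mpr h
      · right
        rw [← hvc]
        exact SimpleGraph.ConnectedComponent.eq.mpr h
    calc _ ≤ ({(F.induce s).connectedComponentMk ⟨D.ρ a, hma⟩,
         (F.induce s).connectedComponentMk ⟨D.ρ (b - 1), hmb⟩} : Set _).ncard :=
          Set.ncard_le_ncard hsub ((Set.finite_singleton _).insert _)
      _ ≤ 2 := (Set.ncard_insert_le _ _).trans (by simp)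
  · have hempty : {c : (F.induce s).ConnectedComponent |
        ∃ v, (F.induce s).connectedComponentMk v = c ∧
          ((F.induce s).neighborSet v).ncard ≤ 1} = ∅ := by
      rw [Set.eq_empty_iff_forall_notMem]
      rintro c ⟨v, -, -⟩
      obtain ⟨i, h1, h2, -⟩ := (hmemU ↑v).mp v.2
      omega
    rw [hempty]
    simp

lemma block_edges (hF : ∀ v, (F.neighborSet v).ncard = 2) (a b : ℕ) (hbn : b ≤ n) :
    b - a - 2 ≤ (F.induce ↑((Finset.Ico a b).image D.ρ)).edgeSet.ncard := by
  set s : Set (Fin n) := ↑((Finset.Ico a b).image D.ρ) with hs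
  have hmemU : ∀ w : Fin n, w ∈ s ↔ ∃ i, a ≤ i ∧ i < b ∧ D.ρ i = w := by
    intro w
    simp [hs, Finset.mem_image, Finset.mem_Ico, and_assoc]
  rcases le_or_gt b (a + 2) with h2 | h2
  · calc b - a - 2 = 0 := by omega
      _ ≤ _ := Nat.zero_le _
  -- main case
  set T : Finset ℕ := (Finset.Ico a (b - 1)).filter (fun i => ¬(i = D.fn i ∧ D.st i < a))
    with hT
  have hTmem : ∀ i, i ∈ T ↔ (a ≤ i ∧ i < b - 1 ∧ ¬(i = D.fn i ∧ D.st i < a)) := by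
    intro i
    simp [hT, Finset.mem_filter, Finset.mem_Ico, and_assoc]
  have hTcard : b - a - 2 ≤ T.card := by
    have hcompl : ((Finset.Ico a (b - 1)).filter (fun i => (i = D.fn i ∧ D.st i < a))).card ≤ 1 := by
      rw [Finset.card_le_one]
      intro i1 hi1 i2 hi2
      simp only [Finset.mem_filter, Finset.mem_Ico] at hi1 hi2
      have e1 := D.hconst i1 (by omega) a (by omega) (by omega)
      have e2 := D.hconst i2 (by omega) a (by omega) (by omega)
      omega
    have := Finset.card_filter_add_card_filter_not
      (s := Finset.Ico a (b - 1)) (p := fun i => (i = D.fn i ∧ D.st i < a))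
    have hIco : (Finset.Ico a (b - 1)).card = b - 1 - a := Nat.card_Ico a (b - 1)
    have hTT : T.card = ((Finset.Ico a (b-1)).filter
        (fun i => ¬(i = D.fn i ∧ D.st i < a))).card := rfl
    omega
  -- the injection into edges
  set f : ℕ → Sym2 (Fin n) := fun i => s(D.ρ i, D.ρ (nxt D.st D.fn i)) with hf
  have hnxtT : ∀ i ∈ T, a ≤ nxt D.st D.fn i ∧ nxt D.st D.fn i < b ∧ nxt D.st D.fn i ≤ D.fn i := by
    intro i hi
    rw [hTmem] at hi
    have hfni := D.hfn i (by omega)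
    have hsti := D.hst i (by omega)
    unfold nxt
    split <;> omega
  have hmaps : ∀ i ∈ T, f i ∈ Sym2.map Subtype.val '' (F.induce s).edgeSet := by
    intro i hi
    have hit := hi
    rw [hTmem] at hit
    have hm1 : D.ρ i ∈ s := (hmemU _).mpr ⟨i, by omega, by omega, rfl⟩
    have hm2 : D.ρ (nxt D.st D.fn i) ∈ s := by
      have := hnxtT i hi
      exact (hmemU _).mpr ⟨nxt D.st D.fn i, by omega, by omega, rfl⟩
    refine ⟨s(⟨D.ρ i, hm1⟩, ⟨D.ρ (nxt D.st D.fn i), hm2⟩), ?_, ?_⟩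
    · rw [SimpleGraph.mem_edgeSet]
      show F.Adj (D.ρ i) (D.ρ (nxt D.st D.fn i))
      exact adj_nxt D i (by omega)
    · rfl
  have hinjOn : Set.InjOn f ↑T := by
    intro i hi j hj heq
    simp only [Finset.mem_coe] at hi hj
    have hit := hi; rw [hTmem] at hit
    have hjt := hj; rw [hTmem] at hjt
    have hni := hnxtT i hi
    have hnj := hnxtT j hj
    have hinn : i < n := by omega
    have hjnn : j < n := by omega
    rw [hf, Sym2.eq_iff] at heq
    rcases heq with ⟨e1, e2⟩ | ⟨e1, e2⟩
    · exact D.inj i hinn j hjnn e1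
    · -- crossed case: i = nxt j and nxt i = j (as indices)
      have hi1 : i = nxt D.st D.fn j := D.inj i hinn _ (by omega) e1
      have hj1 : nxt D.st D.fn i = j := D.inj _ (by omega) j hjnn e2
      exfalso
      unfold nxt at hi1 hj1
      by_cases hie : i = D.fn i <;> by_cases hje : j = D.fn j
      · -- both ends of their blocks
        rw [if_pos hie] at hj1
        rw [if_pos hje] at hi1
        have h1 := D.hst i hinn
        have h2 := D.hst j hjnn
        have hij : i = j := by omega
        subst hij
        have hnbri := D.hnbr i hinn
        have hni2 : nxt D.st D.fn i = i := by
          unfold nxt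
          rw [if_pos hie]
          omega
        have hpi : prv D.st D.fn i = i := by
          unfold prv
          rw [if_pos (by omega)]
          omega
        rw [hni2, hpi, Set.pair_eq_singleton] at hnbri
        have := hF (D.ρ i)
        rw [hnbri, Set.ncard_singleton] at this
        omega
      · rw [if_pos hie] at hj1
        rw [if_neg hje] at hi1
        -- i = j + 1, st i = j, i = fn i : block [j, i] has size 2
        have hnbri := D.hnbr i hinn
        have hpi : prv D.st D.fn i = j := by
          unfold prv
          have := D.hst i hinn
          rw [if_neg (by omega)]
          omega
        have hni2 : nxt D.st D.fn i = j := by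
          unfold nxt
          rw [if_pos hie]
          omega
        rw [hni2, hpi, Set.pair_eq_singleton] at hnbri
        have := hF (D.ρ i)
        rw [hnbri, Set.ncard_singleton] at this
        omega
      · rw [if_neg hie] at hj1
        rw [if_pos hje] at hi1
        have hnbrj := D.hnbr j hjnn
        have hpj : prv D.st D.fn j = i := by
          unfold prv
          have := D.hst j hjnn
          rw [if_neg (by omega)]
          omega
        have hnj2 : nxt D.st D.fn j = i := by
          unfold nxt
          rw [if_pos hje]
          omega
        rw [hnj2, hpj, Set.pair_eq_singleton] at hnbrj
        have := hF (D.ρ j)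
        rw [hnbrj, Set.ncard_singleton] at this
        omega
      · rw [if_neg hie] at hj1
        rw [if_neg hje] at hi1
        omega
  calc b - a - 2 ≤ T.card := hTcard
    _ = (f '' ↑T).ncard := by
        rw [Set.ncard_image_of_injOn hinjOn, Set.ncard_coe_finset]
    _ ≤ (Sym2.map Subtype.val '' (F.induce s).edgeSet).ncard := by
        apply Set.ncard_le_ncard _ (Set.toFinite _)
        rintro _ ⟨i, hi, rfl⟩
        exact hmaps i hi
    _ = (F.induce s).edgeSet.ncard :=
        Set.ncard_image_of_injective _ (Sym2.map.injective Subtype.val_injective)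

end Blocks

/-- Let `k ≥ 1` and let `F` be a `2`-factor on `n` vertices. Then `V(F)`
can be partitioned into parts `U_0, U_1, …, U_{⌊n/k⌋}` with `|U_i| = k` for `1 ≤ i ≤ ⌊n/k⌋`
(hence `|U_0| < k`) such that each part induces a disjoint union of cycles and at most `2`
paths; in particular each `U_i` with `i ≠ 0` induces at least `k − 2` edges. -/
theorem stmt17 (k : ℕ) (hk : 1 ≤ k) (n : ℕ) (F : SimpleGraph (Fin n))
    (hF : ∀ v, (F.neighborSet v).ncard = 2) :
    ∃ U : Fin (n / k + 1) → Finset (Fin n),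
      (∀ i j, i ≠ j → Disjoint (U i) (U j)) ∧
      (∀ v, ∃ i, v ∈ U i) ∧
      (U 0).card < k ∧
      (∀ i, i ≠ 0 → (U i).card = k) ∧
      (∀ i, CyclesAndAtMostTwoPaths (F.induce ↑(U i))) ∧
      (∀ i, i ≠ 0 → k - 2 ≤ (F.induce ↑(U i)).edgeSet.ncard) := by
  classical
  rcases Nat.eq_zero_or_pos n with hn0 | hn
  · subst hn0
    have hone : ∀ i : Fin (0 / k + 1), i = 0 := by
      intro i
      apply Fin.ext
      have h2 := i.isLt
      have h4 : (0 : ℕ) / k = 0 := Nat.zero_div k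
      have h3 : ((0 : Fin (0 / k + 1)) : ℕ) = 0 := Fin.val_zero _
      omega
    refine ⟨fun _ => ∅, fun i j _ => by simp, fun v => v.elim0, by simp; omega,
      fun i hi => absurd (hone i) hi, fun i => ⟨fun v => v.1.elim0, ?_⟩,
      fun i hi => absurd (hone i) hi⟩
    have hempty : {c : (F.induce ↑(∅ : Finset (Fin 0))).ConnectedComponent |
        ∃ v, (F.induce ↑(∅ : Finset (Fin 0))).connectedComponentMk v = c ∧
          ((F.induce ↑(∅ : Finset (Fin 0))).neighborSet v).ncard ≤ 1} = ∅ := by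
      rw [Set.eq_empty_iff_forall_notMem]
      rintro c ⟨v, -, -⟩
      exact v.1.elim0
    rw [hempty]
    simp
  · have hk0 : 0 < k := hk
    obtain ⟨σ, hσ⟩ := exists_perm F hF
    obtain ⟨D⟩ := cycData_exists hn F σ hσ n Finset.univ (by simp) (fun v _ => Finset.mem_univ _)
    set e : ℕ → ℕ := fun j => if j = 0 then 0 else n % k + (j - 1) * k with he
    have he0 : e 0 = 0 := by simp [he]
    have hes : ∀ j, e (j + 1) = n % k + j * k := fun j => by simp [he]
    have hle : ∀ i j, i ≤ j → e i ≤ e j := by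
      intro i j hij
      rcases Nat.eq_zero_or_pos i with rfl | hi
      · rw [he0]; exact Nat.zero_le _
      · have hj : ¬ j = 0 := by omega
        simp only [he, if_neg (by omega : ¬ i = 0), if_neg hj]
        exact Nat.add_le_add_left (Nat.mul_le_mul_right k (by omega)) _
    have hetop : e (n / k + 1) = n := by
      rw [hes]; exact Nat.mod_add_div' n k
    have hebd : ∀ j : ℕ, j ≤ n / k + 1 → e j ≤ n := fun j hj =>
      le_trans (hle j _ hj) (le_of_eq hetop)
    have hdiff : ∀ j : ℕ, j ≠ 0 → e (j + 1) - e j = k := by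
      intro j hj
      rw [hes, show j = (j - 1) + 1 by omega, hes, add_one_mul]
      omega
    set U : Fin (n / k + 1) → Finset (Fin n) :=
      fun i => (Finset.Ico (e (i : ℕ)) (e ((i : ℕ) + 1))).image D.ρ with hU
    have hUm : ∀ (i : Fin (n / k + 1)) (w : Fin n),
        w ∈ U i ↔ ∃ t, e (i : ℕ) ≤ t ∧ t < e ((i : ℕ) + 1) ∧ D.ρ t = w := by
      intro i w
      simp [hU, Finset.mem_image, Finset.mem_Ico, and_assoc]
    have hinjU : ∀ (i : Fin (n / k + 1)), Set.InjOn D.ρ ↑(Finset.Ico (e (i : ℕ)) (e ((i:ℕ) + 1))) := by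
      intro i t1 h1 t2 h2 heq
      simp only [Finset.coe_Ico, Set.mem_Ico] at h1 h2
      have hbd : e ((i : ℕ) + 1) ≤ n := hebd _ i.isLt
      exact D.inj t1 (by omega) t2 (by omega) heq
    refine ⟨U, ?_, ?_, ?_, ?_, ?_, ?_⟩
    · -- disjoint
      have haux : ∀ i j : Fin (n / k + 1), (i : ℕ) < (j : ℕ) → Disjoint (U i) (U j) := by
        intro i j hij
        rw [Finset.disjoint_left]
        intro w hwi hwj
        obtain ⟨t1, h1a, h1b, h1e⟩ := (hUm i w).mp hwi
        obtain ⟨t2, h2a, h2b, h2e⟩ := (hUm j w).mp hwj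
        have hbi : e ((i : ℕ) + 1) ≤ n := hebd _ i.isLt
        have hbj : e ((j : ℕ) + 1) ≤ n := hebd _ j.isLt
        have ht12 : t1 = t2 := D.inj t1 (by omega) t2 (by omega) (h1e.trans h2e.symm)
        have : e ((i : ℕ) + 1) ≤ e (j : ℕ) := hle _ _ (by omega)
        omega
      intro i j hij
      rcases lt_trichotomy (i : ℕ) (j : ℕ) with h | h | h
      · exact haux i j h
      · exact absurd (Fin.ext h) hij
      · exact (haux j i h).symm
    · -- cover
      intro v
      obtain ⟨t, htn, hte⟩ := D.surj v (Finset.mem_univ v)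
      by_cases hc : t < n % k
      · refine ⟨0, (hUm 0 v).mpr ⟨t, ?_, ?_, hte⟩⟩
        · rw [show ((0 : Fin (n / k + 1)) : ℕ) = 0 from rfl, he0]
          exact Nat.zero_le _
        · rw [show ((0 : Fin (n / k + 1)) : ℕ) = 0 from rfl, hes]
          omega
      · push_neg at hc
        set q := (t - n % k) / k with hq
        have hqlt : q < n / k := by
          rw [hq, Nat.div_lt_iff_lt_mul hk0]
          have := Nat.mod_add_div' n k
          omega
        have hmod := Nat.mod_add_div' (t - n % k) k
        have hmodlt : (t - n % k) % k < k := Nat.mod_lt _ hk0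
        rw [← hq] at hmod
        have hmul2 : (q + 1) * k = q * k + k := by ring
        refine ⟨⟨q + 1, by omega⟩, (hUm _ v).mpr ⟨t, ?_, ?_, hte⟩⟩
        · rw [show ((⟨q + 1, by omega⟩ : Fin (n / k + 1)) : ℕ) = q + 1 from rfl, hes]
          omega
        · rw [show ((⟨q + 1, by omega⟩ : Fin (n / k + 1)) : ℕ) = q + 1 from rfl, hes]
          omega
    · -- card U 0 < k
      rw [hU]
      rw [Finset.card_image_of_injOn (hinjU 0), Nat.card_Ico]
      rw [show ((0 : Fin (n / k + 1)) : ℕ) = 0 from rfl, he0, hes]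
      have := Nat.mod_lt n hk0
      omega
    · -- card U i = k
      intro i hi
      have hic : (i : ℕ) ≠ 0 := fun h => hi (Fin.ext h)
      rw [hU]
      rw [Finset.card_image_of_injOn (hinjU i), Nat.card_Ico]
      exact hdiff _ hic
    · -- cycles and at most two paths
      intro i
      exact ⟨fun v => induce_deg_le hF _ v,
        block_two_paths D hF (e (i : ℕ)) (e ((i : ℕ) + 1)) (hebd _ i.isLt)⟩
    · -- edge count
      intro i hi
      have hic : (i : ℕ) ≠ 0 := fun h => hi (Fin.ext h)
      have h1 := block_edges D hF (e (i : ℕ)) (e ((i : ℕ) + 1)) (hebd _ i.isLt)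
      rwa [hdiff _ hic] at h1
end

section
/- Let k ≥ 1 and let F be a 2-factor on 3k vertices. Let B be the bipartite construction with ratio 1/3 on 3k vertices, i.e. the red/blue-coloring of the complete graph on 3k vertices obtained from a partition X ∪ Y with |X| = k by coloring all edges touching X red and all edges inside Y blue. Then B contains a copy of F with at least 2k − 1 red edges, and B contains a copy of F with at least 2k − 1 blue edges. -/
open Finset

section Aux

variable {V : Type*} [Fintype V] [DecidableEq V] (G : SimpleGraph V) [DecidableRel G.Adj]

/-- Number of edges of `G` with both endpoints in `S`. -/
def insideCount (S : Finset V) : ℕ := (G.edgeFinset.filter (fun e => ∀ v ∈ e, v ∈ S)).card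

/-- Number of edges of `G` with at least one endpoint in `S`. -/
def touchCount (S : Finset V) : ℕ := (G.edgeFinset.filter (fun e => ∃ v ∈ e, v ∈ S)).card

lemma insideCount_mono {S T : Finset V} (h : S ⊆ T) : insideCount G S ≤ insideCount G T := by
  apply Finset.card_le_card
  intro e he
  rw [Finset.mem_filter] at he ⊢
  exact ⟨he.1, fun v hv => h (he.2 v hv)⟩

/-- Handshake for a closed set in a 2-regular graph: the number of inside edges equals `S.card`. -/
lemma closed_insideCount (hdeg : ∀ v, G.degree v = 2) (S : Finset V)
    (hcl : ∀ v ∈ S, ∀ w, G.Adj v w → w ∈ S) : insideCount G S = S.card := by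
  classical
  let G' : SimpleGraph V :=
    { Adj := fun v w => G.Adj v w ∧ v ∈ S ∧ w ∈ S
      symm := ⟨by intro v w ⟨h1, h2, h3⟩; exact ⟨h1.symm, h3, h2⟩⟩
      loopless := ⟨by intro v ⟨h1, _⟩; exact G.irrefl h1⟩ }
  letI hdec : DecidableRel G'.Adj := fun v w => instDecidableAnd
  have hedge : G'.edgeFinset = G.edgeFinset.filter (fun e => ∀ v ∈ e, v ∈ S) := by
    ext e
    induction e using Sym2.ind with
    | _ a b =>
      simp only [SimpleGraph.mem_edgeFinset, SimpleGraph.mem_edgeSet, Finset.mem_filter,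
        Sym2.mem_iff]
      constructor
      · rintro ⟨h1, h2, h3⟩
        exact ⟨h1, by rintro v (rfl | rfl) <;> assumption⟩
      · rintro ⟨h1, h2⟩
        exact ⟨h1, h2 a (Or.inl rfl), h2 b (Or.inr rfl)⟩
  have hnbr : ∀ v ∈ S, G'.neighborFinset v = G.neighborFinset v := by
    intro v hv
    ext w
    simp only [SimpleGraph.mem_neighborFinset]
    exact ⟨fun h => h.1, fun h => ⟨h, hv, hcl v hv w h⟩⟩
  have hdegS : ∀ v ∈ S, G'.degree v = 2 := by
    intro v hv
    rw [SimpleGraph.degree, hnbr v hv]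
    exact hdeg v
  have hdeg0 : ∀ v ∉ S, G'.degree v = 0 := by
    intro v hv
    rw [SimpleGraph.degree, Finset.card_eq_zero]
    ext w
    simp only [SimpleGraph.mem_neighborFinset, Finset.notMem_empty, iff_false]
    rintro ⟨_, h2, _⟩
    exact hv h2
  have hsum : ∑ v, G'.degree v = 2 * S.card := by
    rw [← Finset.sum_filter_add_sum_filter_not Finset.univ (· ∈ S)]
    rw [Finset.sum_congr rfl (fun v hv => hdegS v (Finset.mem_filter.mp hv).2),
      Finset.sum_congr rfl (fun v hv => hdeg0 v (Finset.mem_filter.mp hv).2),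
      Finset.sum_const, Finset.sum_const]
    simp [Finset.filter_mem_eq_inter, mul_comm]
  have := SimpleGraph.sum_degrees_eq_twice_card_edges G'
  rw [hsum, hedge] at this
  unfold insideCount
  omega

/-- Greedy growth: in a 2-regular graph there is a `j`-set spanning at least `j-1` edges. -/
lemma growth (hdeg : ∀ v, G.degree v = 2) :
    ∀ j, 1 ≤ j → j ≤ Fintype.card V → ∃ S : Finset V, S.card = j ∧ j - 1 ≤ insideCount G S := by
  intro j
  induction j with
  | zero => omega
  | succ j ih =>
    intro _ hle
    rcases Nat.eq_zero_or_pos j with rfl | hj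
    · -- base case j+1 = 1
      have : 0 < Fintype.card V := by omega
      obtain ⟨v⟩ := Fintype.card_pos_iff.mp this
      exact ⟨{v}, Finset.card_singleton v, by omega⟩
    · obtain ⟨S, hScard, hSin⟩ := ih hj (by omega)
      -- there is a vertex outside S
      have hSlt : S.card < Fintype.card V := by omega
      obtain ⟨v0, hv0⟩ : ∃ v, v ∉ S := by
        by_contra h
        push_neg at h
        have : S = Finset.univ := Finset.eq_univ_iff_forall.mpr h
        rw [this, Finset.card_univ] at hScard
        omega
      by_cases hcase : ∃ v ∉ S, ∃ u ∈ S, G.Adj u v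
      · obtain ⟨v, hv, u, hu, hadj⟩ := hcase
        refine ⟨insert v S, ?_, ?_⟩
        · rw [Finset.card_insert_of_notMem hv, hScard]
        · have hne : v ≠ u := fun h => hv (h ▸ hu)
          have hnew : s(u, v) ∈ (G.edgeFinset.filter (fun e => ∀ w ∈ e, w ∈ insert v S)) := by
            rw [Finset.mem_filter, SimpleGraph.mem_edgeFinset, SimpleGraph.mem_edgeSet]
            refine ⟨hadj, ?_⟩
            intro w hw
            rw [Sym2.mem_iff] at hw
            rcases hw with rfl | rfl
            · exact Finset.mem_insert_of_mem hu
            · exact Finset.mem_insert_self _ _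
          have hsub : insert (s(u,v)) (G.edgeFinset.filter (fun e => ∀ w ∈ e, w ∈ S)) ⊆
              (G.edgeFinset.filter (fun e => ∀ w ∈ e, w ∈ insert v S)) := by
            intro e he
            rcases Finset.mem_insert.mp he with rfl | he
            · exact hnew
            · rw [Finset.mem_filter] at he ⊢
              exact ⟨he.1, fun w hw => Finset.mem_insert_of_mem (he.2 w hw)⟩
          have hnotmem : s(u,v) ∉ (G.edgeFinset.filter (fun e => ∀ w ∈ e, w ∈ S)) := by
            rw [Finset.mem_filter]
            rintro ⟨_, h⟩
            exact hv (h v (Sym2.mem_mk_right u v))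
          have := Finset.card_le_card hsub
          rw [Finset.card_insert_of_notMem hnotmem] at this
          unfold insideCount at hSin ⊢
          omega
      · push_neg at hcase
        have hcl : ∀ u ∈ S, ∀ w, G.Adj u w → w ∈ S := by
          intro u hu w hadj
          by_contra hw
          exact hcase w hw u hu hadj
        have hclosed := closed_insideCount G hdeg S hcl
        refine ⟨insert v0 S, ?_, ?_⟩
        · rw [Finset.card_insert_of_notMem hv0, hScard]
        · have := insideCount_mono G (Finset.subset_insert v0 S)
          omega

/-- Greedy independent set in a graph of max degree ≤ 2. -/
lemma indep_set (hdeg : ∀ v, G.degree v ≤ 2) (T : Finset V) :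
    ∃ S ⊆ T, (∀ u ∈ S, ∀ v ∈ S, ¬ G.Adj u v) ∧ T.card ≤ 3 * S.card := by
  induction T using Finset.strongInduction with
  | _ T ih =>
    rcases Finset.eq_empty_or_nonempty T with rfl | ⟨v, hv⟩
    · exact ⟨∅, Finset.Subset.refl _, by simp, by simp⟩
    · set T' := T \ insert v (G.neighborFinset v) with hT'
      have hss : T' ⊂ T := by
        rw [Finset.ssubset_iff_of_subset (Finset.sdiff_subset)]
        exact ⟨v, hv, fun h => (Finset.mem_sdiff.mp h).2 (Finset.mem_insert_self _ _)⟩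
      obtain ⟨S', hS'sub, hS'ind, hS'card⟩ := ih T' hss
      refine ⟨insert v S', ?_, ?_, ?_⟩
      · intro w hw
        rcases Finset.mem_insert.mp hw with rfl | hw
        · exact hv
        · exact (Finset.mem_sdiff.mp (hS'sub hw)).1
      · intro a ha b hb hadj
        have hnot : ∀ w ∈ S', ¬ G.Adj v w := by
          intro w hw hadj'
          have := (Finset.mem_sdiff.mp (hS'sub hw)).2
          exact this (Finset.mem_insert_of_mem ((G.mem_neighborFinset v w).mpr hadj'))
        have hvS' : v ∉ S' := by
          intro h
          have := (Finset.mem_sdiff.mp (hS'sub h)).2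
          exact this (Finset.mem_insert_self _ _)
        rcases Finset.mem_insert.mp ha with ha1 | ha2 <;> rcases Finset.mem_insert.mp hb with hb1 | hb2
        · rw [ha1, hb1] at hadj; exact G.irrefl hadj
        · rw [ha1] at hadj; exact hnot b hb2 hadj
        · rw [hb1] at hadj; exact hnot a ha2 hadj.symm
        · exact hS'ind a ha2 b hb2 hadj
      · have hvS' : v ∉ S' := by
          intro h
          have := (Finset.mem_sdiff.mp (hS'sub h)).2
          exact this (Finset.mem_insert_self _ _)
        rw [Finset.card_insert_of_notMem hvS']
        have h1 : T.card ≤ T'.card + (insert v (G.neighborFinset v)).card :=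
          Finset.card_le_card_sdiff_add_card
        have h2 : (insert v (G.neighborFinset v)).card ≤ 3 := by
          calc (insert v (G.neighborFinset v)).card ≤ (G.neighborFinset v).card + 1 :=
            Finset.card_insert_le _ _
          _ ≤ 3 := by have := hdeg v; rw [SimpleGraph.degree] at this; omega
        omega

/-- Counting edges touching an independent set in a 2-regular graph. -/
lemma touch_indep (hdeg : ∀ v, G.degree v = 2) (S : Finset V)
    (hind : ∀ u ∈ S, ∀ v ∈ S, ¬ G.Adj u v) : touchCount G S = 2 * S.card := by
  have hbi : G.edgeFinset.filter (fun e => ∃ v ∈ e, v ∈ S)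
      = S.biUnion (fun v => G.incidenceFinset v) := by
    ext e
    simp only [Finset.mem_filter, Finset.mem_biUnion, SimpleGraph.mem_incidenceFinset,
      SimpleGraph.mem_edgeFinset, SimpleGraph.incidenceSet]
    constructor
    · rintro ⟨he, v, hve, hvS⟩
      exact ⟨v, hvS, he, hve⟩
    · rintro ⟨v, hvS, he, hve⟩
      exact ⟨he, v, hve, hvS⟩
  rw [touchCount, hbi, Finset.card_biUnion]
  · rw [Finset.sum_congr rfl (fun v _ => G.card_incidenceFinset_eq_degree v),
      Finset.sum_congr rfl (fun v (_ : v ∈ S) => hdeg v), Finset.sum_const]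
    ring
  · intro u hu w hw huw
    rw [Function.onFun, Finset.disjoint_left]
    intro e heu hew
    rw [SimpleGraph.mem_incidenceFinset] at heu hew
    have : e = s(u, w) := (Sym2.mem_and_mem_iff huw).mp ⟨heu.2, hew.2⟩
    rw [this] at heu
    exact hind u hu w hw heu.1

end Aux

lemma exists_perm_mem_iff {n : ℕ} (S X : Finset (Fin n)) (h : S.card = X.card) :
    ∃ σ : Fin n ≃ Fin n, ∀ v, σ v ∈ X ↔ v ∈ S := by
  classical
  have hc : Sᶜ.card = Xᶜ.card := by
    rw [Finset.card_compl, Finset.card_compl, h]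
  let e : {x // x ∈ S} ≃ {x // x ∈ X} := Finset.equivOfCardEq h
  let f0 : {x // x ∈ Sᶜ} ≃ {x // x ∈ Xᶜ} := Finset.equivOfCardEq hc
  let f : {x // ¬ x ∈ S} ≃ {x // ¬ x ∈ X} :=
    ((Equiv.subtypeEquivRight (fun x => Finset.mem_compl)).symm.trans f0).trans
      (Equiv.subtypeEquivRight (fun x => Finset.mem_compl))
  refine ⟨Equiv.subtypeCongr e f, fun v => ?_⟩
  by_cases hv : v ∈ S
  · have : Equiv.subtypeCongr e f v = (e ⟨v, hv⟩ : Fin n) := by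
      simp [Equiv.subtypeCongr, hv]
    rw [this]
    simp [hv, (e ⟨v, hv⟩).2]
  · have : Equiv.subtypeCongr e f v = (f ⟨v, hv⟩ : Fin n) := by
      simp [Equiv.subtypeCongr, hv]
    rw [this]
    simp [hv, (f ⟨v, hv⟩).2]

/-- Let `k ≥ 1` and let `F` be a `2`-factor on `3k` vertices. The bipartite
construction with ratio `1/3` on `3k` vertices (partition `X ∪ Y` with `|X| = k`, edges
touching `X` red, edges inside `Y` blue) contains a copy of `F` with at least `2k − 1` red
edges, and a copy of `F` with at least `2k − 1` blue edges. -/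
theorem stmt18 (k : ℕ) (hk : 1 ≤ k) (F : SimpleGraph (Fin (3 * k)))
    (hF : ∀ v, (F.neighborSet v).ncard = 2)
    (X : Finset (Fin (3 * k))) (hX : X.card = k) :
    (∃ σ : Fin (3 * k) ≃ Fin (3 * k),
      2 * k - 1 ≤ {e ∈ F.edgeSet | bipColoring X (Sym2.map ⇑σ e) = true}.ncard) ∧
    (∃ σ : Fin (3 * k) ≃ Fin (3 * k),
      2 * k - 1 ≤ {e ∈ F.edgeSet | bipColoring X (Sym2.map ⇑σ e) = false}.ncard) := by
  classical
  have hdeg : ∀ v, F.degree v = 2 := by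
    intro v
    have h := hF v
    rw [Set.ncard_eq_toFinset_card'] at h
    rw [SimpleGraph.degree, SimpleGraph.neighborFinset_def, Set.toFinset_card,
      ← Set.toFinset_card] at *
    exact h
  have hcardV : Fintype.card (Fin (3 * k)) = 3 * k := Fintype.card_fin _
  constructor
  · -- red part: independent set of size k
    obtain ⟨S0, _, hind0, hcard3⟩ := indep_set F (fun v => (hdeg v).le) Finset.univ
    rw [Finset.card_univ, hcardV] at hcard3
    obtain ⟨S, hSsub, hScard⟩ := Finset.exists_subset_card_eq (show k ≤ S0.card by omega)
    have hind : ∀ u ∈ S, ∀ v ∈ S, ¬ F.Adj u v := fun u hu v hv => hind0 u (hSsub hu) v (hSsub hv)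
    obtain ⟨σ, hσ⟩ := exists_perm_mem_iff S X (by rw [hScard, hX])
    refine ⟨σ, ?_⟩
    have hset : {e ∈ F.edgeSet | bipColoring X (Sym2.map ⇑σ e) = true}
        = ↑(F.edgeFinset.filter (fun e => ∃ v ∈ e, v ∈ S)) := by
      ext e
      induction e using Sym2.ind with
      | _ a b =>
        simp only [Set.mem_setOf_eq, Finset.coe_filter, SimpleGraph.mem_edgeFinset,
          Sym2.map_pair_eq, bipColoring, Sym2.lift_mk, Bool.or_eq_true, decide_eq_true_eq,
          Sym2.mem_iff, hσ]
        constructor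
        · rintro ⟨h1, h2 | h2⟩
          · exact ⟨h1, a, Or.inl rfl, h2⟩
          · exact ⟨h1, b, Or.inr rfl, h2⟩
        · rintro ⟨h1, v, (rfl | rfl), h2⟩
          · exact ⟨h1, Or.inl h2⟩
          · exact ⟨h1, Or.inr h2⟩
    rw [hset, Set.ncard_coe_finset]
    have htc := touch_indep F hdeg S hind
    rw [touchCount] at htc
    replace htc : #({e ∈ F.edgeFinset | ∃ v ∈ e, v ∈ S}) = 2 * #S := by convert htc
    rw [htc, hScard]
    omega
  · -- blue part: dense set of size 2k
    obtain ⟨T, hTcard, hTin⟩ := growth F hdeg (2 * k) (by omega) (by rw [hcardV]; omega)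
    obtain ⟨σ, hσ⟩ := exists_perm_mem_iff Tᶜ X
      (by rw [Finset.card_compl, hTcard, hcardV, hX]; omega)
    refine ⟨σ, ?_⟩
    have hmem : ∀ a, σ a ∉ X ↔ a ∈ T := by
      intro a
      rw [hσ a, Finset.mem_compl, not_not]
    have hset : {e ∈ F.edgeSet | bipColoring X (Sym2.map ⇑σ e) = false}
        = ↑(F.edgeFinset.filter (fun e => ∀ v ∈ e, v ∈ T)) := by
      ext e
      induction e using Sym2.ind with
      | _ a b =>
        simp only [Set.mem_setOf_eq, Finset.coe_filter, SimpleGraph.mem_edgeFinset,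
          Sym2.map_pair_eq, bipColoring, Sym2.lift_mk, Bool.or_eq_false_iff,
          decide_eq_false_iff_not, Sym2.mem_iff, hmem]
        constructor
        · rintro ⟨h1, h2, h3⟩
          refine ⟨h1, ?_⟩
          rintro v (rfl | rfl) <;> assumption
        · rintro ⟨h1, h2⟩
          exact ⟨h1, h2 a (Or.inl rfl), h2 b (Or.inr rfl)⟩
    rw [hset, Set.ncard_coe_finset]
    rw [insideCount] at hTin
    convert hTin using 3
end
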